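/- arXiv:2012.08632 — 7 statements merged into one kernel-verified Lean document; each statement's English description precedes it below -/
import Mathlib

section
/- Let H be a graph with minimum degree δ(H) ≥ 2, let H⃗ be an anti-directed orientation of H, and let G be a graph with m(G) < δ(H) − 1/2. Then there exists an orientation of G containing no copy of H⃗. -/
/-!
Since every subgraph `J` of `G` has fewer than `(δ(H) - 1/2)|J|` edges, every nonempty vertex set
contains a vertex with at most `2δ(H) - 2` neighbours inside it, so `G` is `(2δ(H) - 2)`-degenerate.
Along a degeneracy ordering, every vertex sends at most `δ(H) - 1` of the edges to its earlier
neighbours outwards and receives the rest, at most `δ(H) - 1`, inwards. In a copy of `H⃗` the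
latest vertex is a source or a sink of `H⃗`, so all its at least `δ(H)` neighbours in the copy are
earlier and joined to it in the same direction, which is impossible.
-/

/-- An orientation of a simple graph `G`: an assignment of a direction to each edge. -/
structure GraphOrientation {V : Type*} (G : SimpleGraph V) where
  adj : V → V → Prop
  le : ∀ {u v}, adj u v → G.Adj u v
  total : ∀ {u v}, G.Adj u v → adj u v ∨ adj v u
  asymm : ∀ {u v}, adj u v → ¬ adj v u

open Finset Function

section

variable {V : Type*} {G : SimpleGraph V}

namespace SimpleGraph

theorem two_mul_ncard_edgeSet_induce [Fintype V] [DecidableRel G.Adj] (S : Finset V) :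
    2 * ((⊤ : G.Subgraph).induce ↑S).edgeSet.ncard = ∑ v ∈ S, #{w ∈ S | G.Adj v w} := by
  classical
  set J := (⊤ : G.Subgraph).induce ↑S
  have hedges : J.edgeSet.ncard = #J.coe.edgeFinset := by
    rw [← J.image_coe_edgeSet_coe,
      Set.ncard_image_of_injective _ (Sym2.map.injective Subtype.coe_injective),
      Set.ncard_eq_toFinset_card']
    rfl
  have hdegree (v : J.verts) : J.coe.degree v = #{w ∈ S | G.Adj v w} := by
    rw [J.coe_degree, ← Subgraph.finset_card_neighborSet_eq_degree]
    congr 1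
    ext w
    have hv : (v : V) ∈ S := v.2
    simp [J, hv]
  rw [hedges, ← J.coe.sum_degrees_eq_twice_card_edges,
    Finset.sum_subtype S (p := (· ∈ J.verts)) (by simp [J])]
  exact Finset.sum_congr rfl fun v _ => by convert hdegree v

theorem exists_card_adj_lt_of_forall_ncard_edgeSet_lt [Fintype V] [DecidableRel G.Adj] {c : ℚ}
    (hm : ∀ J : G.Subgraph, J.verts.Nonempty → (J.edgeSet.ncard : ℚ) < c * J.verts.ncard)
    {S : Finset V} (hS : S.Nonempty) : ∃ v ∈ S, (#{w ∈ S | G.Adj v w} : ℚ) < 2 * c := by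
  by_contra! hdeg
  have hdense := hm ((⊤ : G.Subgraph).induce ↑S) (by simpa using hS)
  rw [Subgraph.induce_verts, Set.ncard_coe_finset] at hdense
  have hsum : (2 * ((⊤ : G.Subgraph).induce ↑S).edgeSet.ncard : ℚ)
      = ∑ v ∈ S, (#{w ∈ S | G.Adj v w} : ℚ) := mod_cast two_mul_ncard_edgeSet_induce S
  have hlower := S.card_nsmul_le_sum _ _ hdeg
  rw [nsmul_eq_mul] at hlower
  linarith

theorem exists_rank_on_of_degenerate [DecidableEq V] [DecidableRel G.Adj] {k : ℕ}
    (h : ∀ S : Finset V, S.Nonempty → ∃ v ∈ S, #{w ∈ S | G.Adj v w} ≤ k) (S : Finset V) :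
    ∃ r : V → ℕ, (∀ v ∈ S, r v < #S) ∧ Set.InjOn r S ∧
      ∀ v ∈ S, #{w ∈ S | G.Adj v w ∧ r w < r v} ≤ k := by
  induction S using Finset.strongInduction with
  | H S ih =>
  obtain rfl | hS := S.eq_empty_or_nonempty
  · exact ⟨0, by simp, by simp, by simp⟩
  obtain ⟨v, hv, hvk⟩ := h S hS
  obtain ⟨r, hlt, hinj, hback⟩ := ih (S.erase v) (erase_ssubset hv)
  set n := #(S.erase v)
  have hn : n < #S := card_erase_lt_of_mem hv
  -- `v` is ranked above the rest of `S`, so it is no back-neighbour of any other vertex of `S`.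
  have hrest : ∀ x ∈ S, x ≠ v → update r v n x = r x ∧ r x < n := fun x hx hxv =>
    ⟨update_of_ne hxv _ _, hlt x (mem_erase.2 ⟨hxv, hx⟩)⟩
  refine ⟨update r v n, ?_, ?_, ?_⟩
  · intro x hx
    rcases eq_or_ne x v with rfl | hxv
    · simpa
    · have := hrest x hx hxv; omega
  · intro x hx y hy hxy
    rcases eq_or_ne x v with hxv | hxv <;> rcases eq_or_ne y v with hyv | hyv
    · rw [hxv, hyv]
    · have := hrest y hy hyv; rw [hxv, update_self] at hxy; omega
    · have := hrest x hx hxv; rw [hyv, update_self] at hxy; omega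
    · rw [(hrest x hx hxv).1, (hrest y hy hyv).1] at hxy
      exact hinj (mem_erase.2 ⟨hxv, hx⟩) (mem_erase.2 ⟨hyv, hy⟩) hxy
  · intro x hx
    rcases eq_or_ne x v with rfl | hxv
    · exact (card_le_card fun w => by simp +contextual).trans hvk
    · refine le_of_eq_of_le (congrArg card ?_) (hback x (mem_erase.2 ⟨hxv, hx⟩))
      ext w
      have hx' := hrest x hx hxv
      rcases eq_or_ne w v with rfl | hwv
      · simp only [mem_filter, mem_erase, update_self, hx'.1, ne_eq, not_true_eq_false,
          false_and, iff_false, not_and, not_lt]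
        omega
      · simp [hwv, hx'.1]

theorem exists_injective_rank_of_degenerate [Fintype V] [DecidableEq V] [DecidableRel G.Adj]
    {k : ℕ} (h : ∀ S : Finset V, S.Nonempty → ∃ v ∈ S, #{w ∈ S | G.Adj v w} ≤ k) :
    ∃ r : V → ℕ, Injective r ∧ ∀ v, #{w | G.Adj v w ∧ r w < r v} ≤ k := by
  obtain ⟨r, -, hinj, hback⟩ := exists_rank_on_of_degenerate h univ
  exact ⟨r, by simpa using hinj, fun v => by simpa using hback v (mem_univ v)⟩

end SimpleGraph

namespace GraphOrientation

def ofRank (G : SimpleGraph V) (r : V → ℕ) (hr : Injective r) (O : V → Set V) :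
    GraphOrientation G where
  adj x y := G.Adj x y ∧ (r y < r x ∧ y ∈ O x ∨ r x < r y ∧ x ∉ O y)
  le h := h.1
  total {u v} huv := by
    rcases lt_or_gt_of_ne (hr.ne (G.ne_of_adj huv)) with hlt | hlt
    · by_cases hu : u ∈ O v
      · exact .inr ⟨huv.symm, .inl ⟨hlt, hu⟩⟩
      · exact .inl ⟨huv, .inr ⟨hlt, hu⟩⟩
    · by_cases hv : v ∈ O u
      · exact .inl ⟨huv, .inl ⟨hlt, hv⟩⟩
      · exact .inr ⟨huv.symm, .inr ⟨hlt, hv⟩⟩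
  asymm := by
    rintro u v ⟨-, h₁ | h₁⟩ ⟨-, h₂ | h₂⟩
    · omega
    · exact h₂.2 h₁.2
    · exact h₁.2 h₂.2
    · omega

def IsDegenerate (o : GraphOrientation G) (k : ℕ) : Prop :=
  ∀ S : Finset V, S.Nonempty → ∃ v ∈ S, ∀ T ⊆ S,
    ((∀ w ∈ T, o.adj v w) ∨ (∀ w ∈ T, o.adj w v)) → #T ≤ k

theorem exists_isDegenerate [Fintype V] [DecidableEq V] [DecidableRel G.Adj] {k : ℕ}
    (h : ∀ S : Finset V, S.Nonempty → ∃ v ∈ S, #{w ∈ S | G.Adj v w} ≤ 2 * k) :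
    ∃ o : GraphOrientation G, o.IsDegenerate k := by
  obtain ⟨r, hr, hback⟩ := G.exists_injective_rank_of_degenerate h
  set B : V → Finset V := fun v => {w | G.Adj v w ∧ r w < r v}
  choose O hOB hO using fun v => exists_subset_card_eq (min_le_left #(B v) k)
  refine ⟨ofRank G r hr (fun v => O v), fun S hS => ?_⟩
  obtain ⟨v, hv, hmax⟩ := S.exists_max_image r hS
  refine ⟨v, hv, fun T hTS hT => ?_⟩
  rcases hT with hout | hin
  · have hTO : T ⊆ O v := fun w hw => by
      rcases (hout w hw).2 with ⟨-, hwO⟩ | ⟨hlt, -⟩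
      · exact hwO
      · exact absurd (hmax w (hTS hw)) (by omega)
    calc #T ≤ #(O v) := card_le_card hTO
      _ ≤ k := (hO v).trans_le (min_le_right _ _)
  · have hTBO : T ⊆ B v \ O v := fun w hw => by
      obtain ⟨hadj, ⟨hlt, -⟩ | ⟨hlt, hwO⟩⟩ := hin w hw
      · exact absurd (hmax w (hTS hw)) (by omega)
      · exact mem_sdiff.2 ⟨by simpa [B] using ⟨hadj.symm, hlt⟩, hwO⟩
    have hBv : #(B v) ≤ 2 * k := hback v
    calc #T ≤ #(B v \ O v) := card_le_card hTBO
      _ = #(B v) - #(O v) := card_sdiff_of_subset (hOB v)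
      _ ≤ k := by rw [hO v]; omega

theorem not_exists_copy_of_isDegenerate {W : Type*} [Fintype W] {H : SimpleGraph W}
    [DecidableRel H.Adj] {h : GraphOrientation H}
    (hanti : ∀ v : W, (∀ u, ¬ h.adj u v) ∨ (∀ u, ¬ h.adj v u))
    {o : GraphOrientation G} {k : ℕ} (ho : o.IsDegenerate k) (hk : k < H.minDegree) :
    ¬ ∃ f : W → V, Injective f ∧ ∀ a b, h.adj a b → o.adj (f a) (f b) := by
  classical
  rintro ⟨f, hf, hcopy⟩
  have : Nonempty W := by
    by_contra hW
    rw [not_nonempty_iff] at hW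
    have := H.minDegree_of_subsingleton
    omega
  obtain ⟨_, ha, hsparse⟩ := ho (univ.image f) (univ_nonempty.image f)
  obtain ⟨a, -, rfl⟩ := mem_image.1 ha
  have hT := hsparse ((H.neighborFinset a).image f) (image_subset_image (subset_univ _)) <| by
    rcases hanti a with hin | hout
    · refine .inl fun w hw => ?_
      obtain ⟨b, hb, rfl⟩ := mem_image.1 hw
      exact hcopy a b ((h.total ((H.mem_neighborFinset a b).1 hb)).resolve_right (hin b))
    · refine .inr fun w hw => ?_
      obtain ⟨b, hb, rfl⟩ := mem_image.1 hw
      exact hcopy b a ((h.total ((H.mem_neighborFinset a b).1 hb).symm).resolve_right (hout b))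
  rw [card_image_of_injective _ hf, H.card_neighborFinset_eq_degree] at hT
  exact (hk.trans_le (H.minDegree_le_degree a)).not_ge hT

end GraphOrientation

end

/-- Let `H` be a graph with `δ(H) ≥ 2`, let `H⃗` be an anti-directed
orientation of `H` (every vertex has no in-neighbours or no out-neighbours), and let
`G` be a graph with `m(G) < δ(H) - 1/2`.  Then some orientation of `G` contains
no copy of `H⃗`. -/
theorem antidirected_not_oriented_ramsey {V W : Type*} [Fintype V] [Fintype W]
    (H : SimpleGraph W) [DecidableRel H.Adj] (G : SimpleGraph V)
    (hδ : 2 ≤ H.minDegree)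
    (h : GraphOrientation H)
    (hanti : ∀ v : W, (∀ u, ¬ h.adj u v) ∨ (∀ u, ¬ h.adj v u))
    (hm : ∀ J : G.Subgraph, J.verts.Nonempty →
      (J.edgeSet.ncard : ℚ) < ((H.minDegree : ℚ) - 1/2) * J.verts.ncard) :
    ∃ o : GraphOrientation G, ¬ ∃ f : W → V, Function.Injective f ∧
      ∀ a b, h.adj a b → o.adj (f a) (f b) := by
  classical
  have hdegenerate (S : Finset V) (hS : S.Nonempty) :
      ∃ v ∈ S, #{w ∈ S | G.Adj v w} ≤ 2 * (H.minDegree - 1) := by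
    obtain ⟨v, hv, hlt⟩ := G.exists_card_adj_lt_of_forall_ncard_edgeSet_lt hm hS
    have hlt' : (#{w ∈ S | G.Adj v w} : ℚ) + 1 < 2 * H.minDegree := by linarith
    have hnat : #{w ∈ S | G.Adj v w} + 1 < 2 * H.minDegree := by exact_mod_cast hlt'
    exact ⟨v, hv, by omega⟩
  obtain ⟨o, ho⟩ := GraphOrientation.exists_isDegenerate hdegenerate
  exact ⟨o, GraphOrientation.not_exists_copy_of_isDegenerate hanti ho (by omega)⟩
end

section
/- Let k ≥ 4 and let G be a graph with m(G) < m₂(K_k) = (binom(k,2) − 1)/(k − 2). Then there exists an orientation of G in which every copy of the complete graph K_k contains a directed cycle; in particular, no orientation-copy of the transitive tournament TT_k appears in every orientation of G (i.e., G ↛ TT_k). -/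
/-!
Since `(C(k,2) - 1)/(k - 2) = (k + 1)/2`, the density bound gives every nonempty vertex set `s`
a vertex with at most `k` neighbours in `s`, so `G` can be oriented one vertex at a time while
keeping every `k`-clique cyclic. When a vertex `v` with such a neighbourhood `N` is added, orient
`v → A` and `N \ A → v`. A new `k`-clique is `v` together with a `(k-1)`-clique `C ⊆ N`; if `C`
is still acyclic, it suffices that some edge `a → b` of `C` leaves `A`, which closes the triangle
`v → a → b → v`. Such an `A` exists because each such `C` misses at most one vertex of `N`: either
two adjacent vertices lie in every such `C`, and `A` is the tail of the edge between them, or `N`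
is a `k`-clique, which has a cyclic triangle `x y z`, and `A` is read off from the way a fourth
vertex `w` meets `x, y, z`. A transitive tournament contains no directed cycle, hence `G ↛ TT_k`.
-/

open Finset

section

variable {V : Type*}

theorem choose_two_sub_one_div_sub_two {k : ℕ} (hk : k ≠ 2) :
    ((k.choose 2 : ℚ) - 1) / ((k : ℚ) - 2) = ((k : ℚ) + 1) / 2 := by
  have : (k : ℚ) - 2 ≠ 0 := sub_ne_zero.mpr (by exact_mod_cast hk)
  rw [Nat.cast_choose_two]
  field_simp
  ring

theorem not_forall_lt_apply_add_one {α : Type*} [LinearOrder α] {n : ℕ} (c : Fin (n + 1) → α) :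
    ¬ ∀ i, c i < c (i + 1) := by
  obtain ⟨i, hi⟩ := Finite.exists_max c
  exact fun h => (h i).not_ge (hi (i + 1))

namespace Finset
variable {α : Type*} {s t S : Finset α} {a b : α}

theorem mem_or_mem_of_card_le_add_one (hst : s ⊆ t) (hcard : #t ≤ #s + 1)
    (ha : a ∈ t) (hb : b ∈ t) (hab : a ≠ b) : a ∈ s ∨ b ∈ s := by
  classical
  by_contra! h
  have : {a, b} ⊆ t \ s := by simp [insert_subset_iff, ha, hb, h.1, h.2]
  have := card_le_card this
  rw [card_pair hab, card_sdiff_of_subset hst] at this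
  omega

theorem sdiff_subset_of_card_le_add_one [DecidableEq α] (hst : s ⊆ t) (hcard : #t ≤ #s + 1)
    (hSt : S ⊆ t) (hS : ¬ S ⊆ s) : t \ S ⊆ s := by
  obtain ⟨a, haS, has⟩ := not_subset.mp hS
  intro u hu
  rw [mem_sdiff] at hu
  exact (mem_or_mem_of_card_le_add_one hst hcard hu.1 (hSt haS)
    (by rintro rfl; exact hu.2 haS)).resolve_right has

end Finset

namespace SimpleGraph
variable {G : SimpleGraph V}

theorem exists_card_filter_adj_lt_of_density_lt [Fintype V] [DecidableRel G.Adj] {c : ℚ}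
    (hG : ∀ J : G.Subgraph, J.verts.Nonempty → (J.edgeSet.ncard : ℚ) < c * J.verts.ncard)
    {s : Finset V} (hs : s.Nonempty) : ∃ v ∈ s, (#{u ∈ s | G.Adj v u} : ℚ) < 2 * c := by
  classical
  by_contra! hdeg
  set H := ((⊤ : G.Subgraph).induce s).spanningCoe
  have hdensity := hG ((⊤ : G.Subgraph).induce s) (by simpa using hs)
  rw [← Subgraph.edgeSet_spanningCoe, ← coe_edgeFinset, Set.ncard_coe_finset] at hdensity
  have hdeg_le : ∀ v ∈ s, #{u ∈ s | G.Adj v u} ≤ H.degree v := fun v hv =>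
    card_le_card fun u hu => by simp_all [H]
  have : 2 * c * #s ≤ 2 * #H.edgeFinset := by
    calc 2 * c * #s = ∑ _v ∈ s, 2 * c := by rw [sum_const, nsmul_eq_mul]; ring
      _ ≤ ∑ v ∈ s, (#{u ∈ s | G.Adj v u} : ℚ) := sum_le_sum hdeg
      _ ≤ ∑ v ∈ s, (H.degree v : ℚ) := sum_le_sum fun v hv => by exact_mod_cast hdeg_le v hv
      _ ≤ ∑ v, (H.degree v : ℚ) := sum_le_sum_of_subset_of_nonneg (subset_univ s) (by simp)
      _ = 2 * #H.edgeFinset := by exact_mod_cast H.sum_degrees_eq_twice_card_edges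
  simp only [Subgraph.induce_verts, Set.ncard_coe_finset] at hdensity
  linarith

theorem isNClique_image_univ [DecidableEq V] {ι : Type*} [Fintype ι] {f : ι → V}
    (hf : Function.Injective f) (hadj : ∀ i j, i ≠ j → G.Adj (f i) (f j)) :
    G.IsNClique (Fintype.card ι) (univ.image f) := by
  refine ⟨?_, by rw [card_image_of_injective _ hf, card_univ]⟩
  simp only [coe_image, coe_univ, Set.image_univ]
  rintro _ ⟨i, rfl⟩ _ ⟨j, rfl⟩ hij
  exact hadj i j (ne_of_apply_ne f hij)

end SimpleGraph

namespace GraphOrientation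
variable {G : SimpleGraph V} (o : GraphOrientation G)

instance : Nonempty (GraphOrientation G) := by
  obtain ⟨_, -⟩ := exists_wellFoundedLT V
  exact ⟨{ adj := fun u w => G.Adj u w ∧ u < w
           le := And.left
           total := fun h => (lt_or_gt_of_ne h.ne).imp (⟨h, ·⟩) (⟨h.symm, ·⟩)
           asymm := fun h h' => h.2.asymm h'.2 }⟩

theorem irrefl (u : V) : ¬ o.adj u u := fun h => o.asymm h h

theorem ne_of_adj {u w : V} (h : o.adj u w) : u ≠ w := G.ne_of_adj (o.le h)

theorem lt_of_adj {ι : Type*} [LinearOrder ι] {f : ι → V}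
    (hf : ∀ i j, i < j → o.adj (f i) (f j)) {i j : ι} (h : o.adj (f i) (f j)) : i < j := by
  rcases lt_trichotomy i j with hij | rfl | hij
  · exact hij
  · exact absurd h (o.irrefl _)
  · exact absurd (hf j i hij) (o.asymm h)

def reorientAt (v : V) (A : Finset V) : GraphOrientation G where
  adj u w := G.Adj u w ∧ (u = v ∧ w ∈ A ∨ w = v ∧ u ∉ A ∨ u ≠ v ∧ w ≠ v ∧ o.adj u w)
  le := And.left
  total {u w} h := by
    by_cases hu : u = v
    · subst hu; by_cases hw : w ∈ A <;> simp [h, h.symm, h.ne', hw]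
    by_cases hw : w = v
    · subst hw; by_cases hu' : u ∈ A <;> simp [h, h.symm, hu, hu']
    rcases o.total h with h' | h' <;> simp [h, h.symm, hu, hw, h']
  asymm {u w} h h' := by
    have := h.1.ne
    have := o.asymm (u := u) (v := w)
    grind

variable {v : V} {A : Finset V}

theorem reorientAt_adj_of_ne {u w : V} (hu : u ≠ v) (hw : w ≠ v) :
    (o.reorientAt v A).adj u w ↔ o.adj u w := by
  simp only [reorientAt, hu, hw, false_and, false_or, ne_eq, not_false_eq_true, true_and]
  exact ⟨And.right, fun h => ⟨o.le h, h⟩⟩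

theorem reorientAt_adj_left {w : V} : (o.reorientAt v A).adj v w ↔ G.Adj v w ∧ w ∈ A := by
  simp +contextual [reorientAt]
  rintro h rfl
  exact (h.ne rfl).elim

theorem reorientAt_adj_right {u : V} : (o.reorientAt v A).adj u v ↔ G.Adj u v ∧ u ∉ A := by
  simp +contextual [reorientAt]
  rintro h rfl
  exact (h.ne rfl).elim

def HasCyclicTriangle (s : Finset V) : Prop :=
  ∃ x ∈ s, ∃ y ∈ s, ∃ z ∈ s, o.adj x y ∧ o.adj y z ∧ o.adj z x

def HasEdgeLeaving (A s : Finset V) : Prop :=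
  ∃ a ∈ s, ∃ b ∈ s, a ∈ A ∧ b ∉ A ∧ o.adj a b

variable {o}

theorem HasCyclicTriangle.mono {s t : Finset V} (h : o.HasCyclicTriangle s) (hst : s ⊆ t) :
    o.HasCyclicTriangle t := by
  obtain ⟨x, hx, y, hy, z, hz, hxy, hyz, hzx⟩ := h
  exact ⟨x, hst hx, y, hst hy, z, hst hz, hxy, hyz, hzx⟩

theorem HasCyclicTriangle.reorientAt {s : Finset V} (h : o.HasCyclicTriangle s) (hv : v ∉ s) :
    (o.reorientAt v A).HasCyclicTriangle s := by
  obtain ⟨x, hx, y, hy, z, hz, hxy, hyz, hzx⟩ := h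
  have hne : ∀ u ∈ s, u ≠ v := fun u hu huv => hv (huv ▸ hu)
  refine ⟨x, hx, y, hy, z, hz, ?_, ?_, ?_⟩ <;>
    rwa [reorientAt_adj_of_ne _ (hne _ ‹_›) (hne _ ‹_›)]

theorem HasCyclicTriangle.exists_cycle [DecidableEq V] {ι : Type*} [Fintype ι] {f : ι → V}
    (h : o.HasCyclicTriangle (univ.image f)) :
    ∃ c : Fin 3 → ι, Function.Injective c ∧ ∀ q, o.adj (f (c q)) (f (c (q + 1))) := by
  obtain ⟨_, hi, _, hj, _, hl, hij, hjl, hli⟩ := h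
  obtain ⟨i, -, rfl⟩ := mem_image.mp hi
  obtain ⟨j, -, rfl⟩ := mem_image.mp hj
  obtain ⟨l, -, rfl⟩ := mem_image.mp hl
  refine ⟨![i, j, l], ?_, ?_⟩
  · have := o.ne_of_adj hij
    have := o.ne_of_adj hjl
    have := o.ne_of_adj hli
    intro a b hab
    fin_cases a <;> fin_cases b <;> simp_all
  · intro q
    fin_cases q <;> assumption

variable (o)

theorem exists_hasEdgeLeaving_of_adj {c d : V} (hcd : G.Adj c d) :
    ∃ A : Finset V, ∀ s, c ∈ s → d ∈ s → o.HasEdgeLeaving A s := by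
  rcases o.total hcd with h | h
  · exact ⟨{c}, fun s hc hd => ⟨c, hc, d, hd, mem_singleton_self c, by simpa using hcd.ne', h⟩⟩
  · exact ⟨{d}, fun s hc hd => ⟨d, hd, c, hc, mem_singleton_self d, by simpa using hcd.ne, h⟩⟩

-- The case `w → x` of the next lemma; the other cases are its rotations around the triangle.
theorem exists_hasEdgeLeaving_of_adj_of_adj {w x y z : V} (hwx : o.adj w x) (hyz : o.adj y z)
    (hwy : G.Adj w y) (hwz : G.Adj w z) (hxy : x ≠ y) :
    ∃ A : Finset V, ∀ s, w ∈ s → x ∈ s ∨ y ∈ s ∧ z ∈ s → o.HasEdgeLeaving A s := by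
  classical
  have hxw := (o.ne_of_adj hwx).symm
  have hzy := (o.ne_of_adj hyz).symm
  by_cases hwy' : o.adj w y
  · refine ⟨{w}, fun s hw hs => ?_⟩
    rcases hs with hx | ⟨hy, -⟩
    · exact ⟨w, hw, x, hx, mem_singleton_self w, by simpa using hxw, hwx⟩
    · exact ⟨w, hw, y, hy, mem_singleton_self w, by simpa using hwy.ne', hwy'⟩
  · have hyw := (o.total hwy).resolve_left hwy'
    refine ⟨{w, y}, fun s hw hs => ?_⟩
    rcases hs with hx | ⟨hy, hz⟩
    · exact ⟨w, hw, x, hx, by simp, by simp [hxw, hxy], hwx⟩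
    · exact ⟨y, hy, z, hz, by simp, by simp [hwz.ne', hzy], hyz⟩

theorem exists_hasEdgeLeaving_of_triangle_of_adj {w x y z : V}
    (hxy : o.adj x y) (hyz : o.adj y z) (hzx : o.adj z x)
    (hwx : G.Adj w x) (hwy : G.Adj w y) (hwz : G.Adj w z) :
    ∃ A : Finset V, ∀ s, w ∈ s → (x ∈ s ∨ y ∈ s) → (y ∈ s ∨ z ∈ s) → (z ∈ s ∨ x ∈ s) →
      o.HasEdgeLeaving A s := by
  classical
  by_cases hwx' : o.adj w x
  · obtain ⟨A, hA⟩ := o.exists_hasEdgeLeaving_of_adj_of_adj hwx' hyz hwy hwz (o.ne_of_adj hxy)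
    exact ⟨A, fun s hw h₁ _ h₃ => hA s hw (by tauto)⟩
  by_cases hwy' : o.adj w y
  · obtain ⟨A, hA⟩ := o.exists_hasEdgeLeaving_of_adj_of_adj hwy' hzx hwz hwx (o.ne_of_adj hyz)
    exact ⟨A, fun s hw h₁ h₂ _ => hA s hw (by tauto)⟩
  by_cases hwz' : o.adj w z
  · obtain ⟨A, hA⟩ := o.exists_hasEdgeLeaving_of_adj_of_adj hwz' hxy hwx hwy (o.ne_of_adj hzx)
    exact ⟨A, fun s hw _ h₂ h₃ => hA s hw (by tauto)⟩
  have hxw := (o.total hwx).resolve_left hwx'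
  have hyw := (o.total hwy).resolve_left hwy'
  refine ⟨{x, y, z}, fun s hw h₁ _ _ => ?_⟩
  have hwA : w ∉ ({x, y, z} : Finset V) := by simp [hwx.ne, hwy.ne, hwz.ne]
  rcases h₁ with hx | hy
  · exact ⟨x, hx, w, hw, by simp, hwA, hxw⟩
  · exact ⟨y, hy, w, hw, by simp, hwA, hyw⟩

theorem exists_hasEdgeLeaving_of_isNClique {k : ℕ} (hk : 4 ≤ k) {N : Finset V}
    (hN : G.IsNClique k N) (hNcyc : o.HasCyclicTriangle N) :
    ∃ A : Finset V, ∀ C ⊆ N, G.IsNClique (k - 1) C → ¬ o.HasCyclicTriangle C →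
      o.HasEdgeLeaving A C := by
  classical
  obtain ⟨x, hx, y, hy, z, hz, hxy, hyz, hzx⟩ := hNcyc
  obtain ⟨w, hw⟩ : (N \ {x, y, z}).Nonempty := by
    rw [← card_pos]
    have := le_card_sdiff {x, y, z} N
    have := card_le_three (a := x) (b := y) (c := z)
    have := hN.card_eq
    omega
  obtain ⟨hwN, hwxyz⟩ := mem_sdiff.mp hw
  have hadj : ∀ u ∈ ({x, y, z} : Finset V), G.Adj w u := fun u hu =>
    hN.isClique hwN (by simp at hu; rcases hu with rfl | rfl | rfl <;> assumption)
      (by rintro rfl; exact hwxyz hu)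
  obtain ⟨A, hA⟩ := o.exists_hasEdgeLeaving_of_triangle_of_adj hxy hyz hzx
    (hadj x (by simp)) (hadj y (by simp)) (hadj z (by simp))
  refine ⟨A, fun C hCN hC hC₃ => ?_⟩
  have hcard : #N ≤ #C + 1 := by rw [hN.card_eq, hC.card_eq]; omega
  have hxyz : ¬ {x, y, z} ⊆ C := fun h =>
    hC₃ ⟨x, h (by simp), y, h (by simp), z, h (by simp), hxy, hyz, hzx⟩
  have hmem {a b : V} (ha : a ∈ N) (hb : b ∈ N) (hab : a ≠ b) : a ∈ C ∨ b ∈ C :=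
    mem_or_mem_of_card_le_add_one hCN hcard ha hb hab
  exact hA C (sdiff_subset_of_card_le_add_one hCN hcard
      (by simp [insert_subset_iff, hx, hy, hz]) hxyz hw)
    (hmem hx hy (o.ne_of_adj hxy)) (hmem hy hz (o.ne_of_adj hyz)) (hmem hz hx (o.ne_of_adj hzx))

theorem exists_hasEdgeLeaving_of_card_le {k : ℕ} (hk : 4 ≤ k) {N : Finset V} (hN : #N ≤ k)
    (hNcyc : G.IsNClique k N → o.HasCyclicTriangle N) :
    ∃ A : Finset V, ∀ C ⊆ N, G.IsNClique (k - 1) C → ¬ o.HasCyclicTriangle C →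
      o.HasEdgeLeaving A C := by
  classical
  by_cases hbad : ∃ C ⊆ N, G.IsNClique (k - 1) C ∧ ¬ o.HasCyclicTriangle C
  swap
  · exact ⟨∅, fun C hCN hC hC₃ => absurd ⟨C, hCN, hC, hC₃⟩ hbad⟩
  obtain ⟨C₀, hC₀N, hC₀, -⟩ := hbad
  rcases (card_le_card hC₀N).eq_or_lt with hNC₀ | hNC₀
  · obtain rfl := eq_of_subset_of_card_le hC₀N hNC₀.ge
    obtain ⟨c, hc, d, hd, hcd⟩ := one_lt_card.mp (show 1 < #C₀ by rw [hC₀.card_eq]; omega)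
    obtain ⟨A, hA⟩ := o.exists_hasEdgeLeaving_of_adj (hC₀.isClique hc hd hcd)
    refine ⟨A, fun C hCN hC _ => ?_⟩
    obtain rfl := eq_of_subset_of_card_le hCN (by rw [hC.card_eq, hC₀.card_eq])
    exact hA C hc hd
  have hNk : #N = k := by have := hC₀.card_eq; omega
  by_cases hNcl : G.IsClique N
  · exact o.exists_hasEdgeLeaving_of_isNClique hk ⟨hNcl, hNk⟩ (hNcyc ⟨hNcl, hNk⟩)
  obtain ⟨a, ha, b, hb, hab, hnadj⟩ : ∃ a ∈ N, ∃ b ∈ N, a ≠ b ∧ ¬ G.Adj a b := by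
    simpa [SimpleGraph.IsClique, Set.Pairwise] using hNcl
  have hsub : ∀ C ⊆ N, G.IsNClique (k - 1) C → N \ {a, b} ⊆ C := fun C hCN hC =>
    sdiff_subset_of_card_le_add_one hCN (by rw [hNk, hC.card_eq]; omega)
      (by simp [insert_subset_iff, ha, hb])
      fun h => hnadj (hC.isClique (h (by simp)) (h (by simp)) hab)
  obtain ⟨c, hc, d, hd, hcd⟩ := one_lt_card.mp (show 1 < #(N \ {a, b}) by
    have := le_card_sdiff {a, b} N
    have := card_le_two (a := a) (b := b)
    omega)
  obtain ⟨A, hA⟩ := o.exists_hasEdgeLeaving_of_adj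
    (hC₀.isClique (hsub C₀ hC₀N hC₀ hc) (hsub C₀ hC₀N hC₀ hd) hcd)
  exact ⟨A, fun C hCN hC _ => hA C (hsub C hCN hC hc) (hsub C hCN hC hd)⟩

theorem reorientAt_hasCyclicTriangle [DecidableEq V] {k : ℕ} {s : Finset V}
    (hs : ∀ t ⊆ s, G.IsNClique k t → o.HasCyclicTriangle t)
    (hA : ∀ C ⊆ s, (∀ u ∈ C, G.Adj v u) → G.IsNClique (k - 1) C → ¬ o.HasCyclicTriangle C →
      o.HasEdgeLeaving A C)
    {t : Finset V} (hts : t ⊆ insert v s) (ht : G.IsNClique k t) :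
    (o.reorientAt v A).HasCyclicTriangle t := by
  by_cases hvt : v ∉ t
  · exact (hs t (fun u hu => (mem_insert.mp (hts hu)).resolve_left (by rintro rfl; exact hvt hu))
      ht).reorientAt hvt
  rw [not_not] at hvt
  have hCs : t.erase v ⊆ s := fun u hu =>
    (mem_insert.mp (hts (mem_of_mem_erase hu))).resolve_left (ne_of_mem_erase hu)
  have hCv : ∀ u ∈ t.erase v, G.Adj v u := fun u hu =>
    ht.isClique hvt (mem_of_mem_erase hu) (ne_of_mem_erase hu).symm
  by_cases hC₃ : o.HasCyclicTriangle (t.erase v)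
  · exact (hC₃.reorientAt (notMem_erase v t)).mono (erase_subset v t)
  obtain ⟨a, ha, b, hb, haA, hbA, hab⟩ := hA _ hCs hCv (ht.erase_of_mem hvt) hC₃
  refine ⟨v, hvt, a, mem_of_mem_erase ha, b, mem_of_mem_erase hb, ?_, ?_, ?_⟩
  · exact o.reorientAt_adj_left.mpr ⟨hCv a ha, haA⟩
  · exact (o.reorientAt_adj_of_ne (ne_of_mem_erase ha) (ne_of_mem_erase hb)).mpr hab
  · exact o.reorientAt_adj_right.mpr ⟨(hCv b hb).symm, hbA⟩

theorem exists_forall_subset_isNClique_hasCyclicTriangle [DecidableEq V] [DecidableRel G.Adj]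
    {k : ℕ} (hk : 4 ≤ k) (hdeg : ∀ s : Finset V, s.Nonempty → ∃ v ∈ s, #{u ∈ s | G.Adj v u} ≤ k)
    (s : Finset V) :
    ∃ o : GraphOrientation G, ∀ t ⊆ s, G.IsNClique k t → o.HasCyclicTriangle t := by
  induction s using Finset.strongInduction with
  | H s ih =>
  rcases s.eq_empty_or_nonempty with rfl | hs
  · obtain ⟨o⟩ : Nonempty (GraphOrientation G) := inferInstance
    refine ⟨o, fun t ht htk => ?_⟩
    have := htk.card_eq
    rw [subset_empty.mp ht, card_empty] at this
    omega
  obtain ⟨v, hv, hvdeg⟩ := hdeg s hs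
  obtain ⟨o, ho⟩ := ih (s.erase v) (erase_ssubset hv)
  have hN : {u ∈ s | G.Adj v u} ⊆ s.erase v := fun u hu =>
    mem_erase.mpr ⟨(mem_filter.mp hu).2.ne', (mem_filter.mp hu).1⟩
  obtain ⟨A, hA⟩ := o.exists_hasEdgeLeaving_of_card_le hk hvdeg (ho _ hN)
  refine ⟨o.reorientAt v A, fun t hts ht => o.reorientAt_hasCyclicTriangle ho ?_
    (by rwa [insert_erase hv]) ht⟩
  exact fun C hCs hCv => hA C fun u hu => mem_filter.mpr ⟨mem_of_mem_erase (hCs hu), hCv u hu⟩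

end GraphOrientation

end

/-- Let `k ≥ 4` and let `G` be a graph with
`m(G) < m₂(K_k) = (C(k,2) - 1)/(k - 2)`.  Then `G` has an orientation in which every
copy of `K_k` contains a directed cycle; in particular, this orientation contains
no copy of the transitive tournament `TT_k`, i.e. `G ↛ TT_k`. -/
theorem not_oriented_ramsey_transitive_tournament {V : Type*} [Fintype V]
    (k : ℕ) (hk : 4 ≤ k) (G : SimpleGraph V)
    (hm : ∀ J : G.Subgraph, J.verts.Nonempty →
      (J.edgeSet.ncard : ℚ) <
        (((k.choose 2 : ℚ) - 1) / ((k : ℚ) - 2)) * J.verts.ncard) :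
    ∃ o : GraphOrientation G,
      (∀ f : Fin k → V, Function.Injective f →
        (∀ i j, i ≠ j → G.Adj (f i) (f j)) →
        ∃ (m : ℕ) (c : Fin (m + 3) → Fin k), Function.Injective c ∧
          ∀ i : Fin (m + 3), o.adj (f (c i)) (f (c (i + 1)))) ∧
      ¬ ∃ f : Fin k → V, Function.Injective f ∧
        ∀ i j : Fin k, i < j → o.adj (f i) (f j) := by
  classical
  have hdeg (s : Finset V) (hs : s.Nonempty) : ∃ v ∈ s, #{u ∈ s | G.Adj v u} ≤ k := by
    obtain ⟨v, hv, hlt⟩ := G.exists_card_filter_adj_lt_of_density_lt hm hs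
    rw [choose_two_sub_one_div_sub_two (by omega)] at hlt
    have : (#{u ∈ s | G.Adj v u} : ℚ) < k + 1 := by linarith
    exact ⟨v, hv, Nat.lt_succ_iff.mp (by exact_mod_cast this)⟩
  obtain ⟨o, ho⟩ := GraphOrientation.exists_forall_subset_isNClique_hasCyclicTriangle hk hdeg univ
  have hcycle (f : Fin k → V) (hf : Function.Injective f)
      (hadj : ∀ i j, i ≠ j → G.Adj (f i) (f j)) :
      ∃ (m : ℕ) (c : Fin (m + 3) → Fin k), Function.Injective c ∧
        ∀ i : Fin (m + 3), o.adj (f (c i)) (f (c (i + 1))) :=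
    ⟨0, (ho _ (subset_univ _) (by simpa using G.isNClique_image_univ hf hadj)).exists_cycle⟩
  refine ⟨o, hcycle, fun ⟨f, hf, hlt⟩ => ?_⟩
  obtain ⟨m, c, -, hc⟩ := hcycle f hf fun i j hij => by
    rcases hij.lt_or_gt with h | h
    exacts [o.le (hlt i j h), (o.le (hlt j i h)).symm]
  exact not_forall_lt_apply_add_one c fun i => o.lt_of_adj hlt (hc i)
end

section
/- Let C⃗ be an orientation of a cycle of length ℓ ≥ 4 that contains a block (maximal directed subpath) with at least 3 edges. If G is a graph with m(G) < m₂(C⃗) = (ℓ−1)/(ℓ−2), then some orientation of G contains no copy of C⃗. -/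
open Finset

namespace SimpleGraph

variable {V : Type*} [Fintype V] {G : SimpleGraph V}

theorem Subgraph.mul_ncard_verts_le_two_mul_ncard_edgeSet (J : G.Subgraph) (k : ℕ)
    (hdeg : ∀ v ∈ J.verts, k ≤ (J.neighborSet v).ncard) :
    k * J.verts.ncard ≤ 2 * J.edgeSet.ncard := by
  classical
  have hcoe_deg (v : J.verts) : J.coe.degree v = (J.neighborSet v).ncard := by
    rw [← card_neighborSet_eq_degree, Fintype.card_congr (J.coeNeighborSetEquiv v),
      ← Nat.card_eq_fintype_card, Nat.card_coe_set_eq]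
  have hcoe_edges : #J.coe.edgeFinset = J.edgeSet.ncard := by
    rw [← Set.ncard_coe_finset, coe_edgeFinset, ← J.image_coe_edgeSet_coe,
      Set.ncard_image_of_injective _ (Sym2.map.injective Subtype.val_injective)]
  calc k * J.verts.ncard = ∑ _v : J.verts, k := by
        rw [sum_const, card_univ, smul_eq_mul, mul_comm, ← Nat.card_eq_fintype_card,
          Nat.card_coe_set_eq]
    _ ≤ ∑ v, J.coe.degree v := sum_le_sum fun v _ => (hcoe_deg v).symm ▸ hdeg v v.2
    _ = 2 * J.edgeSet.ncard := by
        rw [← hcoe_edges, ← J.coe.sum_degrees_eq_twice_card_edges]; congr!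

theorem exists_card_filter_adj_le_of_forall_ncard_edgeSet_lt [DecidableRel G.Adj] (k : ℕ)
    (hsparse : ∀ J : G.Subgraph, J.verts.Nonempty →
      (J.edgeSet.ncard : ℚ) < ((k + 1) / 2 : ℚ) * J.verts.ncard)
    (S : Finset V) (hS : S.Nonempty) :
    ∃ v ∈ S, #{w ∈ S | G.Adj v w} ≤ k := by
  by_contra! hdeg
  let J : G.Subgraph := (⊤ : G.Subgraph).induce S
  have hverts : J.verts = S := rfl
  have hJdeg : ∀ v ∈ J.verts, k + 1 ≤ (J.neighborSet v).ncard := by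
    intro v hv
    have hnbr : J.neighborSet v = ↑({w ∈ S | G.Adj v w}) := by
      ext w
      simp only [J, Subgraph.mem_neighborSet, Subgraph.induce_adj, Subgraph.top_adj, coe_filter,
        Set.mem_ofPred_eq, mem_coe]
      exact ⟨fun h => ⟨h.2.1, h.2.2⟩, fun h => ⟨hv, h⟩⟩
    rw [hnbr, Set.ncard_coe_finset]
    exact hdeg v hv
  have hcount := J.mul_ncard_verts_le_two_mul_ncard_edgeSet (k + 1) hJdeg
  have hdense := hsparse J (by simpa [hverts] using hS)
  rw [hverts, Set.ncard_coe_finset] at hcount hdense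
  have hcount' : ((k : ℚ) + 1) * #S ≤ 2 * J.edgeSet.ncard := by exact_mod_cast hcount
  linarith

theorem colorable_of_forall_exists_card_filter_adj_le [DecidableRel G.Adj] (k : ℕ)
    (hlow : ∀ S : Finset V, S.Nonempty → ∃ v ∈ S, #{w ∈ S | G.Adj v w} ≤ k) :
    G.Colorable (k + 1) := by
  classical
  suffices h : ∀ S : Finset V, ∃ c : V → Fin (k + 1), ∀ u ∈ S, ∀ w ∈ S, G.Adj u w → c u ≠ c w by
    obtain ⟨c, hc⟩ := h univ
    exact ⟨Coloring.mk c fun huw => hc _ (mem_univ _) _ (mem_univ _) huw⟩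
  intro S
  induction S using Finset.strongInduction with
  | H S ih =>
  rcases S.eq_empty_or_nonempty with rfl | hS
  · exact ⟨fun _ => 0, by simp⟩
  obtain ⟨v, hv, hdeg⟩ := hlow S hS
  obtain ⟨c, hc⟩ := ih (S.erase v) (erase_ssubset hv)
  have hfree : #({w ∈ S.erase v | G.Adj v w}.image c) < #(univ : Finset (Fin (k + 1))) :=
    calc #({w ∈ S.erase v | G.Adj v w}.image c) ≤ #{w ∈ S | G.Adj v w} :=
          card_image_le.trans (card_le_card (filter_subset_filter _ (erase_subset v S)))
      _ < #(univ : Finset (Fin (k + 1))) := by simpa using Nat.lt_succ_of_le hdeg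
  obtain ⟨a, -, ha⟩ := exists_mem_notMem_of_card_lt_card hfree
  have ha_ne {w : V} (hw : w ∈ S) (hvw : G.Adj v w) : a ≠ c w := by
    rintro rfl
    exact ha (mem_image_of_mem c (mem_filter.2 ⟨mem_erase.2 ⟨hvw.ne.symm, hw⟩, hvw⟩))
  refine ⟨Function.update c v a, fun u hu w hw huw => ?_⟩
  rcases eq_or_ne u v with rfl | huv
  · rw [Function.update_self, Function.update_of_ne huw.ne.symm]
    exact ha_ne hw huw
  rcases eq_or_ne w v with rfl | hwv
  · rw [Function.update_self, Function.update_of_ne huv]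
    exact (ha_ne hu huw.symm).symm
  rw [Function.update_of_ne huv, Function.update_of_ne hwv]
  exact hc u (mem_erase.2 ⟨huv, hu⟩) w (mem_erase.2 ⟨hwv, hw⟩) huw

end SimpleGraph

namespace GraphOrientation

variable {V : Type*} {G : SimpleGraph V}

def ofColoring {α : Type*} [LinearOrder α] (c : G.Coloring α) : GraphOrientation G where
  adj u v := G.Adj u v ∧ c u < c v
  le h := h.1
  total h := (lt_or_gt_of_ne (c.valid h)).imp (⟨h, ·⟩) (⟨h.symm, ·⟩)
  asymm h h' := lt_asymm h.2 h'.2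

theorem ofColoring_not_adj_chain (c : G.Coloring (Fin 3)) {x₀ x₁ x₂ x₃ : V}
    (h₀ : (ofColoring c).adj x₀ x₁) (h₁ : (ofColoring c).adj x₁ x₂)
    (h₂ : (ofColoring c).adj x₂ x₃) : False := by
  have := h₀.2
  have := h₁.2
  have := h₂.2
  omega

theorem exists_adj_chain_of_copy (o : GraphOrientation G) {N : ℕ} [NeZero N]
    {σ : Fin N → Bool} {f : Fin N → V}
    (hf : ∀ i, (σ i = true → o.adj (f i) (f (i + 1))) ∧ (σ i = false → o.adj (f (i + 1)) (f i)))
    {i : Fin N} {b : Bool} (hb : σ i = b ∧ σ (i + 1) = b ∧ σ (i + 2) = b) :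
    ∃ x₀ x₁ x₂ x₃, o.adj x₀ x₁ ∧ o.adj x₁ x₂ ∧ o.adj x₂ x₃ := by
  have h₂ : i + 1 + 1 = i + 2 := by open Fin.CommRing in ring
  have h₃ : i + 2 + 1 = i + 3 := by open Fin.CommRing in ring
  obtain ⟨hb₀, hb₁, hb₂⟩ := hb
  have e₀ := hf i
  have e₁ := hf (i + 1)
  have e₂ := hf (i + 2)
  rw [h₂] at e₁
  rw [h₃] at e₂
  cases b
  · exact ⟨_, _, _, _, e₂.2 hb₂, e₁.2 hb₁, e₀.2 hb₀⟩
  · exact ⟨_, _, _, _, e₀.1 hb₀, e₁.1 hb₁, e₂.1 hb₂⟩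

end GraphOrientation

/-- Let `C⃗` be an orientation of the cycle of length `ℓ = n + 4 ≥ 4`
(encoded by `σ : Fin ℓ → Bool`, where `σ i = true` means the edge `{i, i+1}` is
directed `i → i+1`) which contains a block (maximal directed subpath) with at least 3
edges, i.e. three consecutive edges oriented the same way.  If `G` is a graph with
`m(G) < m₂(C_ℓ) = (ℓ-1)/(ℓ-2)`, then some orientation of `G` contains no copy of `C⃗`. -/
theorem not_oriented_ramsey_cycle_long_block {V : Type*} [Fintype V]
    (n : ℕ) (σ : Fin (n + 4) → Bool)
    (hblock : ∃ (i : Fin (n + 4)) (b : Bool),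
      σ i = b ∧ σ (i + 1) = b ∧ σ (i + 2) = b)
    (G : SimpleGraph V)
    (hm : ∀ J : G.Subgraph, J.verts.Nonempty →
      (J.edgeSet.ncard : ℚ) < (((n : ℚ) + 3) / ((n : ℚ) + 2)) * J.verts.ncard) :
    ∃ o : GraphOrientation G, ¬ ∃ f : Fin (n + 4) → V, Function.Injective f ∧
      ∀ i : Fin (n + 4), (σ i = true → o.adj (f i) (f (i + 1))) ∧
        (σ i = false → o.adj (f (i + 1)) (f i)) := by
  classical
  have hq : ((n : ℚ) + 3) / ((n : ℚ) + 2) ≤ ((2 : ℕ) + 1) / 2 := by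
    rw [div_le_div_iff₀ (by positivity) (by norm_num)]
    push_cast
    linarith [(n.cast_nonneg : (0 : ℚ) ≤ n)]
  have hsparse : ∀ J : G.Subgraph, J.verts.Nonempty →
      (J.edgeSet.ncard : ℚ) < ((2 : ℕ) + 1) / 2 * J.verts.ncard :=
    fun J hJ => (hm J hJ).trans_le (mul_le_mul_of_nonneg_right hq (by positivity))
  obtain ⟨c⟩ := G.colorable_of_forall_exists_card_filter_adj_le 2
    (G.exists_card_filter_adj_le_of_forall_ncard_edgeSet_lt 2 hsparse)
  refine ⟨.ofColoring c, ?_⟩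
  rintro ⟨f, -, hf⟩
  obtain ⟨i, b, hb⟩ := hblock
  obtain ⟨_, _, _, _, h₀, h₁, h₂⟩ := (GraphOrientation.ofColoring c).exists_adj_chain_of_copy hf hb
  exact GraphOrientation.ofColoring_not_adj_chain c h₀ h₁ h₂
end

section
/- Let k ≥ 4 and let H⃗ be any orientation of the cycle C_k. Then for any two edges e, f of C_k and any orientation of e and f, this partial orientation extends to an orientation of C_k containing no copy of H⃗ (i.e., not isomorphic to H⃗ as a digraph). -/
/-!
An injective arc-preserving self-map of an oriented `k`-cycle, `k ≥ 3`, is a rotation or a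
reflection of `ℤ/k`. A rotation preserves the number of edges oriented `i → i + 1`, and a
reflection replaces it by `k` minus that number. So if `τ` contains a copy of `σ`, the forward
count of `τ` is one of two values determined by `σ`. With two edges prescribed, `k ≥ 4` leaves two
free edges, whose orientations realise three consecutive forward counts, one of which avoids both.
-/

/-- The arc relation of the orientation of the cycle on `Fin m` encoded by
`σ : Fin m → Bool`: the edge `{i, i+1}` is directed `i → i+1` if `σ i = true`,
and `i+1 → i` otherwise. -/
def cycleArc {m : ℕ} [NeZero m] (σ : Fin m → Bool) (i j : Fin m) : Prop :=
  (j = i + 1 ∧ σ i = true) ∨ (i = j + 1 ∧ σ j = false)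

namespace CycleOrientation

section forwardCount

variable {m : ℕ}

def forwardCount (σ : Fin m → Bool) : ℕ := ∑ i, (σ i).toNat

theorem forwardCount_comp_equiv (σ : Fin m → Bool) (e : Fin m ≃ Fin m) :
    forwardCount (σ ∘ e) = forwardCount σ :=
  e.sum_comp fun i => (σ i).toNat

theorem forwardCount_not_add (σ : Fin m → Bool) :
    forwardCount (fun i => !σ i) + forwardCount σ = m := by
  have h : ∀ i, (!σ i).toNat + (σ i).toNat = 1 := fun i => by cases σ i <;> rfl
  simp only [forwardCount, ← Finset.sum_add_distrib, h, Finset.sum_const, Finset.card_univ,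
    Fintype.card_fin, smul_eq_mul, mul_one]

theorem forwardCount_le (σ : Fin m → Bool) : forwardCount σ ≤ m := by
  have := forwardCount_not_add σ
  omega

theorem forwardCount_update_true {σ : Fin m → Bool} {i : Fin m} (hi : σ i = false) :
    forwardCount (Function.update σ i true) = forwardCount σ + 1 := by
  simp only [forwardCount, Fintype.sum_eq_add_sum_compl i, Function.update_self, hi,
    Bool.toNat_true, Bool.toNat_false]
  rw [add_comm, zero_add]
  congr 1
  refine Finset.sum_congr rfl fun j hj => ?_
  rw [Function.update_of_ne (by simpa using hj)]

theorem exists_update_forwardCount_ne {τ : Fin m → Bool} {i j : Fin m} (hij : i ≠ j)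
    (hi : τ i = false) (hj : τ j = false) (a b : ℕ) :
    ∃ τ' : Fin m → Bool, (∀ v, v ≠ i → v ≠ j → τ' v = τ v) ∧
      forwardCount τ' ≠ a ∧ forwardCount τ' ≠ b := by
  have h₁ : forwardCount (Function.update τ i true) = forwardCount τ + 1 :=
    forwardCount_update_true hi
  have h₂ : forwardCount (Function.update (Function.update τ i true) j true) =
      forwardCount (Function.update τ i true) + 1 :=
    forwardCount_update_true (by rw [Function.update_of_ne hij.symm, hj])
  -- of three consecutive counts, one avoids both `a` and `b`
  by_cases h₀ : forwardCount τ ≠ a ∧ forwardCount τ ≠ b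
  · exact ⟨τ, fun _ _ _ => rfl, h₀⟩
  by_cases h₁' : forwardCount (Function.update τ i true) ≠ a ∧
      forwardCount (Function.update τ i true) ≠ b
  · exact ⟨_, fun v hv _ => Function.update_of_ne hv _ _, h₁'⟩
  refine ⟨Function.update (Function.update τ i true) j true, fun v hvi hvj => ?_,
    by omega, by omega⟩
  rw [Function.update_of_ne hvj, Function.update_of_ne hvi]

end forwardCount

open Fin.CommRing

variable {m : ℕ} [NeZero m]

theorem add_one_add_one_ne (hm : 2 < m) (i : Fin m) : i + 1 + 1 ≠ i := by
  intro h
  have h2 : (2 : Fin m) = 0 := by linear_combination h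
  have := congrArg Fin.val h2
  simp [Nat.mod_eq_of_lt hm] at this

theorem cycleArc_succ_or_succ_cycleArc (σ : Fin m → Bool) (i : Fin m) :
    cycleArc σ i (i + 1) ∨ cycleArc σ (i + 1) i := by
  cases h : σ i
  · exact Or.inr (Or.inr ⟨rfl, h⟩)
  · exact Or.inl (Or.inl ⟨rfl, h⟩)

theorem sub_eq_one_or_neg_one_of_cycleArc {τ : Fin m → Bool} {a b : Fin m}
    (h : cycleArc τ a b ∨ cycleArc τ b a) : b - a = 1 ∨ b - a = -1 := by
  rcases h with (⟨rfl, -⟩ | ⟨rfl, -⟩) | (⟨rfl, -⟩ | ⟨rfl, -⟩)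
  · left; ring
  · right; ring
  · right; ring
  · left; ring

theorem cycleArc_add_left_iff (τ : Fin m → Bool) (c i j : Fin m) :
    cycleArc τ (c + i) (c + j) ↔ cycleArc (fun k => τ (c + k)) i j := by
  simp only [cycleArc, add_assoc, add_right_inj]

theorem cycleArc_sub_left_iff (τ : Fin m → Bool) (c i j : Fin m) :
    cycleArc τ (c - i) (c - j) ↔ cycleArc (fun k => !τ (c - (k + 1))) i j := by
  have e₁ : c - j = c - i + 1 ↔ i = j + 1 := by
    constructor <;> intro h <;> linear_combination h
  have e₂ : c - i = c - j + 1 ↔ j = i + 1 := by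
    constructor <;> intro h <;> linear_combination h
  simp only [cycleArc, e₁, e₂, Bool.not_eq_true', Bool.not_eq_false']
  rw [or_comm]
  apply or_congr <;> apply and_congr_right <;> rintro rfl <;> rfl

theorem eq_of_forall_cycleArc_imp (hm : 2 < m) {σ ρ : Fin m → Bool}
    (h : ∀ i j, cycleArc σ i j → cycleArc ρ i j) : σ = ρ := by
  funext i
  cases hσ : σ i
  · rcases h (i + 1) i (Or.inr ⟨rfl, hσ⟩) with ⟨hi, -⟩ | ⟨-, hρ⟩
    · exact absurd hi.symm (add_one_add_one_ne hm i)
    · exact hρ.symm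
  · rcases h i (i + 1) (Or.inl ⟨rfl, hσ⟩) with ⟨-, hρ⟩ | ⟨hi, -⟩
    · exact hρ.symm
    · exact absurd hi.symm (add_one_add_one_ne hm i)

theorem eq_add_or_eq_sub_of_cycleArc_embedding (hm : 2 < m) {σ τ : Fin m → Bool}
    {g : Fin m → Fin m} (hg : Function.Injective g)
    (h : ∀ i j, cycleArc σ i j → cycleArc τ (g i) (g j)) :
    (∀ i, g i = g 0 + i) ∨ (∀ i, g i = g 0 - i) := by
  have step (i : Fin m) : g (i + 1) - g i = 1 ∨ g (i + 1) - g i = -1 :=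
    sub_eq_one_or_neg_one_of_cycleArc ((cycleArc_succ_or_succ_cycleArc σ i).imp (h _ _) (h _ _))
  -- a change of direction would give `g (i + 2) = g i`
  have step_succ (i : Fin m) : g (i + 1 + 1) - g (i + 1) = g (i + 1) - g i := by
    by_contra hne
    refine add_one_add_one_ne hm i (hg ?_)
    rcases step i with h₁ | h₁ <;> rcases step (i + 1) with h₂ | h₂
    all_goals first | exact absurd (h₂.trans h₁.symm) hne | linear_combination h₁ + h₂
  have step_nat (k : ℕ) : g ((k : Fin m) + 1) - g k = g 1 - g 0 := by
    induction k with
    | zero => simp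
    | succ k ih => rw [Nat.cast_succ, step_succ, ih]
  have lin_nat (k : ℕ) : g k = g 0 + k * (g 1 - g 0) := by
    induction k with
    | zero => simp
    | succ k ih => rw [Nat.cast_succ]; linear_combination step_nat k + ih
  have lin (i : Fin m) : g i = g 0 + i * (g 1 - g 0) := by
    simpa only [Fin.cast_val_eq_self] using lin_nat i.val
  rcases step 0 with h₁ | h₁ <;> rw [zero_add] at h₁
  · exact Or.inl fun i => by rw [lin i, h₁, mul_one]
  · exact Or.inr fun i => by rw [lin i, h₁]; ring

theorem forwardCount_eq_or_add_eq_of_cycleArc_embedding (hm : 2 < m) {σ τ : Fin m → Bool}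
    {g : Fin m → Fin m} (hg : Function.Injective g)
    (h : ∀ i j, cycleArc σ i j → cycleArc τ (g i) (g j)) :
    forwardCount τ = forwardCount σ ∨ forwardCount τ + forwardCount σ = m := by
  rcases eq_add_or_eq_sub_of_cycleArc_embedding hm hg h with hrot | hrefl
  · have hσ : σ = fun k => τ (g 0 + k) := eq_of_forall_cycleArc_imp hm fun i j hij => by
      simpa only [hrot i, hrot j, cycleArc_add_left_iff] using h i j hij
    rw [hσ]
    exact Or.inl (forwardCount_comp_equiv τ (Equiv.addLeft (g 0))).symm
  · have hσ : σ = fun k => !τ (g 0 - (k + 1)) := eq_of_forall_cycleArc_imp hm fun i j hij => by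
      simpa only [hrefl i, hrefl j, cycleArc_sub_left_iff] using h i j hij
    rw [hσ, ← forwardCount_comp_equiv τ ((Equiv.addRight 1).trans (Equiv.subLeft (g 0))),
      add_comm]
    exact Or.inr (forwardCount_not_add _)

end CycleOrientation

open CycleOrientation

/-- Let `k = n + 4 ≥ 4` and let `H⃗` be any orientation of the cycle
`C_k` (encoded by `σ`).  For any two (distinct) edges of `C_k` (indexed by
`i₁ ≠ i₂`, edge `i` being `{i, i+1}`) and any orientation of them (the Booleans
`b₁, b₂`), this partial orientation extends to an orientation `τ` of `C_k`
containing no copy of `H⃗`, i.e. no injective map sending arcs of `σ` to arcs of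
`τ`. -/
theorem cycle_two_ramsey_avoidable (n : ℕ) (σ : Fin (n + 4) → Bool)
    (i₁ i₂ : Fin (n + 4)) (h12 : i₁ ≠ i₂) (b₁ b₂ : Bool) :
    ∃ τ : Fin (n + 4) → Bool, τ i₁ = b₁ ∧ τ i₂ = b₂ ∧
      ¬ ∃ g : Fin (n + 4) → Fin (n + 4), Function.Injective g ∧
        ∀ i j, cycleArc σ i j → cycleArc τ (g i) (g j) := by
  have hfree : 1 < ({i₁, i₂}ᶜ : Finset (Fin (n + 4))).card := by
    rw [Finset.card_compl, Fintype.card_fin]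
    have := Finset.card_le_two (a := i₁) (b := i₂)
    omega
  obtain ⟨i₃, h₃, i₄, h₄, h₃₄⟩ := Finset.one_lt_card.1 hfree
  simp only [Finset.mem_compl, Finset.mem_insert, Finset.mem_singleton, not_or] at h₃ h₄
  obtain ⟨τ, hτ, hne, hne'⟩ := exists_update_forwardCount_ne
    (τ := Function.update (Function.update (fun _ => false) i₁ b₁) i₂ b₂) h₃₄
    (by simp [h₃.1, h₃.2]) (by simp [h₄.1, h₄.2]) (forwardCount σ) (n + 4 - forwardCount σ)
  refine ⟨τ, ?_, ?_, fun ⟨g, hg, harc⟩ => ?_⟩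
  · rw [hτ i₁ (Ne.symm h₃.1) (Ne.symm h₄.1)]
    simp [h12]
  · rw [hτ i₂ (Ne.symm h₃.2) (Ne.symm h₄.2)]
    simp
  have := forwardCount_le σ
  rcases forwardCount_eq_or_add_eq_of_cycleArc_embedding (by omega) hg harc with h | h <;> omega
end

section
/- Let H⃗ be an anti-directed orientation of a graph H with δ(H) ≥ 2 and v(H) ≥ 4. Then for any two edges of H and any orientation of them, the partial orientation extends to an orientation of H containing a directed path with 2 edges (hence not isomorphic to H⃗, since H⃗ is anti-directed). -/
/-!
The two prescribed arcs `u₁ → v₁`, `u₂ → v₂` can always be completed to a directed path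
with two edges: continue `u₁ → v₁` by an arc `v₁ → w` to a second neighbour `w` of `v₁`,
unless that arc would reverse `u₂ → v₂` (that is, `v₂ = v₁` and `w = u₂`), in which case
prepend an arc `w' → u₁` from a second neighbour `w'` of `u₁`.

Such an orientation `o` contains no copy of an anti-directed orientation `h` of the same finite
graph: both orientations have exactly one arc per edge, so an injective arc-preserving map
carries the arcs of `h` *onto* those of `o`, and a directed path `a → b → c` of `o` would pull
back to one in `h`.
-/

namespace SimpleGraph

theorem exists_adj_ne_of_one_lt_degree {V : Type*} {G : SimpleGraph V} {v : V}
    [Fintype (G.neighborSet v)] (hv : 1 < G.degree v) (u : V) : ∃ w, G.Adj v w ∧ w ≠ u := by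
  rw [← card_neighborFinset_eq_degree] at hv
  obtain ⟨w, hw, hwu⟩ := Finset.exists_mem_ne hv u
  exact ⟨w, (mem_neighborFinset G v w).1 hw, hwu⟩

end SimpleGraph

namespace GraphOrientation

variable {V : Type*} {G : SimpleGraph V}

def arcs (o : GraphOrientation G) : Set (V × V) := {p | o.adj p.1 p.2}

def IsAntidirected (o : GraphOrientation G) : Prop :=
  ∀ v, (∀ u, ¬ o.adj u v) ∨ (∀ u, ¬ o.adj v u)

theorem IsAntidirected.not_adj_of_adj {o : GraphOrientation G} (ho : o.IsAntidirected)
    {a b c : V} (hab : o.adj a b) : ¬ o.adj b c :=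
  (ho b).elim (fun hin => absurd hab (hin a)) (fun hout => hout c)

def orientEdge (o : GraphOrientation G) {x y : V} (hxy : G.Adj x y) : GraphOrientation G where
  adj a b := (a = x ∧ b = y) ∨ (o.adj a b ∧ ¬ (a = y ∧ b = x))
  le := by
    rintro a b (⟨rfl, rfl⟩ | ⟨hab, -⟩)
    exacts [hxy, o.le hab]
  total := by
    intro a b hab
    by_cases hfwd : a = x ∧ b = y
    · exact .inl (.inl hfwd)
    by_cases hbwd : a = y ∧ b = x
    · exact .inr (.inl hbwd.symm)
    rcases o.total hab with hab' | hba'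
    · exact .inl (.inr ⟨hab', hbwd⟩)
    · exact .inr (.inr ⟨hba', fun h => hfwd h.symm⟩)
  asymm := by
    rintro a b (⟨rfl, rfl⟩ | ⟨hab, hbwd⟩) (⟨hbx, hay⟩ | ⟨hba, hfwd⟩)
    · exact hxy.ne hay
    · exact hfwd ⟨rfl, rfl⟩
    · exact hbwd ⟨hay, hbx⟩
    · exact o.asymm hab hba

theorem orientEdge_adj_self (o : GraphOrientation G) {x y : V} (hxy : G.Adj x y) :
    (o.orientEdge hxy).adj x y :=
  .inl ⟨rfl, rfl⟩

theorem orientEdge_adj_of_adj (o : GraphOrientation G) {x y a b : V} (hxy : G.Adj x y)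
    (hab : o.adj a b) (hne : ¬ (a = y ∧ b = x)) : (o.orientEdge hxy).adj a b :=
  .inr ⟨hab, hne⟩

theorem ncard_arcs (o : GraphOrientation G) : o.arcs.ncard = G.edgeSet.ncard := by
  have hinj : Set.InjOn (fun p : V × V => s(p.1, p.2)) o.arcs := by
    rintro ⟨a, b⟩ hab ⟨c, d⟩ hcd heq
    rcases Sym2.eq_iff.1 heq with ⟨rfl, rfl⟩ | ⟨rfl, rfl⟩
    · rfl
    · exact absurd hab (o.asymm hcd)
  have himage : (fun p : V × V => s(p.1, p.2)) '' o.arcs = G.edgeSet := by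
    ext e
    induction e using Sym2.ind with
    | _ x y =>
      refine ⟨?_, fun hxy => ?_⟩
      · rintro ⟨⟨a, b⟩, hab, heq⟩
        rw [← heq]
        exact o.le hab
      · rcases o.total hxy with hxy' | hyx'
        · exact ⟨(x, y), hxy', rfl⟩
        · exact ⟨(y, x), hyx', Sym2.eq_swap⟩
  rw [← himage, hinj.ncard_image]

theorem image_arcs_eq [Finite V] {h o : GraphOrientation G} {g : V → V}
    (hg : Function.Injective g) (hmap : ∀ a b, h.adj a b → o.adj (g a) (g b)) :
    Prod.map g g '' h.arcs = o.arcs :=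
  Set.eq_of_subset_of_ncard_le (Set.image_subset_iff.2 fun p hp => hmap p.1 p.2 hp)
    (by rw [Set.ncard_image_of_injective _ (hg.prodMap hg), ncard_arcs, ncard_arcs])
    (Set.toFinite _)

theorem not_exists_embedding_of_isAntidirected [Finite V] {h o : GraphOrientation G}
    (hanti : h.IsAntidirected) {a b c : V} (hab : o.adj a b) (hbc : o.adj b c) :
    ¬ ∃ g : V → V, Function.Injective g ∧ ∀ a b, h.adj a b → o.adj (g a) (g b) := by
  rintro ⟨g, hg, hmap⟩
  have harcs := image_arcs_eq hg hmap
  obtain ⟨⟨p₁, p₂⟩, hp, hpab⟩ : (a, b) ∈ Prod.map g g '' h.arcs := harcs ▸ hab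
  obtain ⟨⟨q₁, q₂⟩, hq, hqbc⟩ : (b, c) ∈ Prod.map g g '' h.arcs := harcs ▸ hbc
  simp only [Prod.map, Prod.mk.injEq] at hpab hqbc
  obtain rfl : p₂ = q₁ := hg (hpab.2.trans hqbc.1.symm)
  exact hanti.not_adj_of_adj hp hq

theorem exists_orientation_with_path [Fintype V] [DecidableRel G.Adj] (hδ : 2 ≤ G.minDegree)
    (o : GraphOrientation G) {u₁ v₁ u₂ v₂ : V} (e₁ : G.Adj u₁ v₁) (e₂ : G.Adj u₂ v₂)
    (hrev : ¬ (u₁ = v₂ ∧ v₁ = u₂)) :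
    ∃ o' : GraphOrientation G, o'.adj u₁ v₁ ∧ o'.adj u₂ v₂ ∧
      ∃ a b c : V, a ≠ c ∧ o'.adj a b ∧ o'.adj b c := by
  have hnbr (v u : V) : ∃ w, G.Adj v w ∧ w ≠ u :=
    G.exists_adj_ne_of_one_lt_degree (hδ.trans (G.minDegree_le_degree v)) u
  set o₁ := (o.orientEdge e₁).orientEdge e₂
  have h₁ : o₁.adj u₁ v₁ := orientEdge_adj_of_adj _ e₂ (orientEdge_adj_self o e₁) hrev
  have h₂ : o₁.adj u₂ v₂ := orientEdge_adj_self _ e₂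
  obtain ⟨w, hv₁w, hwu₁⟩ := hnbr v₁ u₁
  by_cases hforced : v₁ = v₂ ∧ w = u₂
  · obtain ⟨rfl, -⟩ := hforced
    obtain ⟨w', hu₁w', hw'v₁⟩ := hnbr u₁ v₁
    have hkeep (x : V) : ¬ (x = u₁ ∧ v₁ = w') := fun h => hw'v₁ h.2.symm
    exact ⟨o₁.orientEdge hu₁w'.symm, orientEdge_adj_of_adj _ _ h₁ (hkeep u₁),
      orientEdge_adj_of_adj _ _ h₂ (hkeep u₂), w', u₁, v₁, hw'v₁,
      orientEdge_adj_self _ _, orientEdge_adj_of_adj _ _ h₁ (hkeep u₁)⟩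
  · have hkeep₁ : ¬ (u₁ = w ∧ v₁ = v₁) := fun h => hwu₁ h.1.symm
    exact ⟨o₁.orientEdge hv₁w, orientEdge_adj_of_adj _ _ h₁ hkeep₁,
      orientEdge_adj_of_adj _ _ h₂ fun h => hforced ⟨h.2.symm, h.1.symm⟩, u₁, v₁, w, hwu₁.symm,
      orientEdge_adj_of_adj _ _ h₁ hkeep₁, orientEdge_adj_self _ _⟩

end GraphOrientation

open GraphOrientation in
theorem antidirected_two_ramsey_avoidable_general {W : Type*} [Fintype W]
    (H : SimpleGraph W) [DecidableRel H.Adj]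
    (hδ : 2 ≤ H.minDegree)
    (h : GraphOrientation H)
    (hanti : ∀ v : W, (∀ u, ¬ h.adj u v) ∨ (∀ u, ¬ h.adj v u))
    (u₁ v₁ u₂ v₂ : W) (e₁ : H.Adj u₁ v₁) (e₂ : H.Adj u₂ v₂)
    (hef : s(u₁, v₁) ≠ s(u₂, v₂)) :
    ∃ o : GraphOrientation H, o.adj u₁ v₁ ∧ o.adj u₂ v₂ ∧
      (∃ a b c : W, a ≠ c ∧ o.adj a b ∧ o.adj b c) ∧
      ¬ ∃ g : W → W, Function.Injective g ∧
        ∀ a b, h.adj a b → o.adj (g a) (g b) := by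
  have hrev : ¬ (u₁ = v₂ ∧ v₁ = u₂) := by
    rintro ⟨rfl, rfl⟩
    exact hef Sym2.eq_swap
  obtain ⟨o, h₁, h₂, a, b, c, hac, hab, hbc⟩ := exists_orientation_with_path hδ h e₁ e₂ hrev
  exact ⟨o, h₁, h₂, ⟨a, b, c, hac, hab, hbc⟩,
    not_exists_embedding_of_isAntidirected hanti hab hbc⟩

/-- Let `H⃗` be an anti-directed orientation of a graph `H` with
`δ(H) ≥ 2` and `v(H) ≥ 4`.  Then for any two distinct edges of `H` and any
orientation of them (`u₁ → v₁` and `u₂ → v₂`), the partial orientation extends to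
an orientation of `H` containing a directed path with 2 edges (hence containing no
copy of `H⃗`, since `H⃗` is anti-directed). -/
theorem antidirected_two_ramsey_avoidable {W : Type*} [Fintype W]
    (H : SimpleGraph W) [DecidableRel H.Adj]
    (hcard : 4 ≤ Fintype.card W) (hδ : 2 ≤ H.minDegree)
    (h : GraphOrientation H)
    (hanti : ∀ v : W, (∀ u, ¬ h.adj u v) ∨ (∀ u, ¬ h.adj v u))
    (u₁ v₁ u₂ v₂ : W) (e₁ : H.Adj u₁ v₁) (e₂ : H.Adj u₂ v₂)
    (hef : s(u₁, v₁) ≠ s(u₂, v₂)) :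
    ∃ o : GraphOrientation H, o.adj u₁ v₁ ∧ o.adj u₂ v₂ ∧
      (∃ a b c : W, a ≠ c ∧ o.adj a b ∧ o.adj b c) ∧
      ¬ ∃ g : W → W, Function.Injective g ∧
        ∀ a b, h.adj a b → o.adj (g a) (g b) :=
  antidirected_two_ramsey_avoidable_general H hδ h hanti u₁ v₁ u₂ v₂ e₁ e₂ hef
end

section
/- Let G be a graph such that every cycle in G has length congruent to 2 modulo 3, and let G' be obtained from G by adding a path P with 4 edges whose endpoints are the two endpoints of some edge uv ∈ E(G) and whose internal vertices are new. Then every cycle in G' also has length congruent to 2 modulo 3. -/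
/-!
A cycle of `addFourPath G u v` either avoids the new vertices, and is then a cycle of `G`, or
passes through one of them. The new vertices have degree two, so in the latter case it runs
through the whole new path `u - n₀ - n₁ - n₂ - v` and closes up along a `v`-`u` path `p` of `G`.
Either `p` is the edge `vu`, or `p` together with `uv` is a cycle of `G`; in both cases
`|p| ≡ 1 (mod 3)`, and the cycle has length `|p| + 4 ≡ 2 (mod 3)`.
-/

/-- The graph obtained from `G` by adding a path with 4 edges
`u - n₀ - n₁ - n₂ - v` whose internal vertices `n₀, n₁, n₂` are new. -/
def addFourPath {V : Type*} (G : SimpleGraph V) (u v : V) :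
    SimpleGraph (V ⊕ Fin 3) :=
  SimpleGraph.fromRel (fun a b =>
    match a, b with
    | Sum.inl x, Sum.inl y => G.Adj x y
    | Sum.inl x, Sum.inr i => (x = u ∧ i = 0) ∨ (x = v ∧ i = 2)
    | Sum.inr _, Sum.inl _ => False
    | Sum.inr i, Sum.inr j => (i = 0 ∧ j = 1) ∨ (i = 1 ∧ j = 2))

namespace SimpleGraph.Walk

variable {V W : Type*} {G : SimpleGraph V} {H : SimpleGraph W}

theorem exists_map_eq_of_forall_mem_range (f : G ↪g H) {a b : V} (w : H.Walk (f a) (f b))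
    (hw : ∀ z ∈ w.support, z ∈ Set.range f) : ∃ p : G.Walk a b, p.map f.toHom = w := by
  suffices ∀ {x y : W} (w : H.Walk x y), (∀ z ∈ w.support, z ∈ Set.range f) →
      ∀ {a b : V} (ha : f a = x) (hb : f b = y),
        ∃ p : G.Walk a b, (p.map f.toHom).copy ha hb = w by
    simpa using this w hw rfl rfl
  intro x y w hw
  induction w with
  | nil =>
    rintro a b rfl hb
    obtain rfl := f.injective hb
    exact ⟨nil, rfl⟩
  | @cons _ y' _ h q ih =>
    rintro a b rfl rfl
    obtain ⟨c, rfl⟩ := hw y' (by simp)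
    obtain ⟨p, hp⟩ := ih (fun z hz => hw z (by simp [hz])) rfl rfl
    exact ⟨cons (f.map_adj_iff.mp h) p, by simpa using hp⟩

theorem exists_eq_cons_of_forall_adj {x y a b : V} {p : G.Walk x y} (hxy : x ≠ y)
    (hx : ∀ z, G.Adj x z → z = a ∨ z = b) (hb : s(x, b) ∉ p.edges) :
    ∃ (h : G.Adj x a) (q : G.Walk a y), p = cons h q := by
  cases p with
  | nil => exact absurd rfl hxy
  | @cons _ z _ h q =>
    rcases hx z h with rfl | rfl
    · exact ⟨h, q, rfl⟩
    · simp at hb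

theorem IsCycle.mem_support_of_forall_adj {x z a b : V} {c : G.Walk x x} (hc : c.IsCycle)
    (hz : z ∈ c.support) (hzab : ∀ y, G.Adj z y → y = a ∨ y = b) :
    a ∈ c.support ∧ b ∈ c.support := by
  have hsub : c.toSubgraph.neighborSet z ⊆ {a, b} :=
    fun y hy => hzab y (c.toSubgraph.adj_sub hy)
  have heq : c.toSubgraph.neighborSet z = {a, b} := by
    refine Set.eq_of_subset_of_ncard_le hsub ?_ (Set.toFinite _)
    rw [hc.ncard_neighborSet_toSubgraph_eq_two hz]
    exact (Set.ncard_insert_le _ _).trans (by simp)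
  have hmem : ∀ y ∈ ({a, b} : Set V), y ∈ c.support := fun y hy => by
    rw [← heq] at hy
    exact mem_support_of_adj_toSubgraph (c.toSubgraph.adj_symm hy)
  exact ⟨hmem a (by simp), hmem b (by simp)⟩

theorem IsPath.length_mod_three_of_adj
    (hG : ∀ (x : V) (c : G.Walk x x), c.IsCycle → c.length % 3 = 2)
    {a b : V} {p : G.Walk a b} (hp : p.IsPath) (hba : G.Adj b a) : p.length % 3 = 1 := by
  by_cases he : s(a, b) ∈ p.edges
  · rw [hp.length_eq_one_of_mem_edges he]
  · have := hG b _ ((cons_isCycle_iff p hba).mpr ⟨hp, by rwa [Sym2.eq_swap]⟩)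
    rw [length_cons] at this
    omega

end SimpleGraph.Walk

namespace addFourPath

open SimpleGraph Walk

variable {V : Type*} {G : SimpleGraph V} {u v : V}

@[simp] theorem adj_inl_inl {x y : V} :
    (addFourPath G u v).Adj (.inl x) (.inl y) ↔ G.Adj x y := by
  simp only [addFourPath, fromRel_adj, ne_eq, Sum.inl.injEq]
  exact ⟨fun h => h.2.elim id G.adj_symm, fun h => ⟨h.ne, .inl h⟩⟩

theorem eq_of_adj_inr_zero {z : V ⊕ Fin 3} (h : (addFourPath G u v).Adj (.inr 0) z) :
    z = .inl u ∨ z = .inr 1 := by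
  rcases z with _ | j <;> simp [addFourPath] at h ⊢ <;> omega

theorem eq_of_adj_inr_one {z : V ⊕ Fin 3} (h : (addFourPath G u v).Adj (.inr 1) z) :
    z = .inr 0 ∨ z = .inr 2 := by
  rcases z with _ | j <;> simp [addFourPath] at h ⊢
  omega

theorem eq_of_adj_inr_two {z : V ⊕ Fin 3} (h : (addFourPath G u v).Adj (.inr 2) z) :
    z = .inl v ∨ z = .inr 1 := by
  rcases z with _ | j <;> simp [addFourPath] at h ⊢ <;> omega

def inlEmbedding : G ↪g addFourPath G u v where
  toFun := Sum.inl
  inj' := Sum.inl_injective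
  map_rel_iff' := adj_inl_inl

theorem exists_map_inlEmbedding_eq {a b : V} (w : (addFourPath G u v).Walk (.inl a) (.inl b))
    (hw : ∀ j, .inr j ∉ w.support) : ∃ p : G.Walk a b, p.map inlEmbedding.toHom = w := by
  refine w.exists_map_eq_of_forall_mem_range inlEmbedding ?_
  rintro (y | j) hz
  · exact ⟨y, rfl⟩
  · exact absurd hz (hw j)

theorem length_mod_three_of_isPath_of_forall_inr_notMem (huv : G.Adj u v)
    (hG : ∀ (x : V) (c : G.Walk x x), c.IsCycle → c.length % 3 = 2)
    {m : (addFourPath G u v).Walk (.inl v) (.inl u)} (hm : m.IsPath)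
    (hnew : ∀ j, .inr j ∉ m.support) : m.length % 3 = 1 := by
  obtain ⟨p, hpm⟩ := exists_map_inlEmbedding_eq m hnew
  have hp : p.IsPath := (isPath_map_iff_of_injective Sum.inl_injective).mp (hpm ▸ hm)
  have hlen : m.length = p.length := hpm ▸ length_map _ _
  exact hlen ▸ hp.length_mod_three_of_adj hG huv

theorem inr_one_mem_support {x : V ⊕ Fin 3} {c : (addFourPath G u v).Walk x x}
    (hc : c.IsCycle) {j : Fin 3} (hj : .inr j ∈ c.support) : .inr 1 ∈ c.support := by
  fin_cases j
  · exact (hc.mem_support_of_forall_adj hj fun _ => eq_of_adj_inr_zero).2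
  · exact hj
  · exact (hc.mem_support_of_forall_adj hj fun _ => eq_of_adj_inr_two).2

theorem length_mod_three_of_snd_eq_inr_zero (huv : G.Adj u v)
    (hG : ∀ (x : V) (c : G.Walk x x), c.IsCycle → c.length % 3 = 2)
    {c : (addFourPath G u v).Walk (.inr 1) (.inr 1)} (hc : c.IsCycle) (hsnd : c.snd = .inr 0) :
    c.length % 3 = 2 := by
  cases c with
  | nil => exact absurd hc not_isCycle_nil
  | cons h q =>
    rw [snd_cons] at hsnd
    subst hsnd
    obtain ⟨hq, hedge⟩ := (cons_isCycle_iff q h).mp hc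
    obtain ⟨_, q₁, rfl⟩ := q.exists_eq_cons_of_forall_adj (by simp)
      (fun _ => eq_of_adj_inr_zero) (by rwa [Sym2.eq_swap])
    have h0 : .inr 0 ∉ q₁.support := ((cons_isPath_iff _ _).mp hq).2
    -- the rest of the cycle, read backwards from `n₁`, must go through `n₂` and then `v`
    obtain ⟨h₁₂, q₂, hq₂⟩ := q₁.reverse.exists_eq_cons_of_forall_adj (a := .inr 2) (b := .inr 0)
      (by simp) (fun _ h => (eq_of_adj_inr_one h).symm)
      (fun he => h0 (by simpa using q₁.reverse.snd_mem_support_of_mem_edges he))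
    have hq₂p : q₂.IsPath ∧ .inr 1 ∉ q₂.support := by
      rw [← cons_isPath_iff h₁₂, ← hq₂]
      exact hq.of_cons.reverse
    obtain ⟨_, m, rfl⟩ := q₂.exists_eq_cons_of_forall_adj (a := .inl v) (b := .inr 1) (by simp)
      (fun _ => eq_of_adj_inr_two)
      (fun he => hq₂p.2 (by simpa using q₂.snd_mem_support_of_mem_edges he))
    obtain ⟨hm, h2⟩ := (cons_isPath_iff _ _).mp hq₂p.1
    have h1 : .inr 1 ∉ m.support := fun hz => hq₂p.2 (by simp [hz])
    have h0' : .inr 0 ∉ m.support := fun hz => h0 <| by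
      rw [← List.mem_reverse, ← support_reverse, hq₂]
      simp [hz]
    have hlen : q₁.length = m.length + 2 := by
      rw [← length_reverse, hq₂, length_cons, length_cons]
    have := length_mod_three_of_isPath_of_forall_inr_notMem huv hG hm
      fun j => by fin_cases j <;> assumption
    rw [length_cons, length_cons]
    omega

theorem length_mod_three_of_isCycle_inr_one (huv : G.Adj u v)
    (hG : ∀ (x : V) (c : G.Walk x x), c.IsCycle → c.length % 3 = 2)
    {c : (addFourPath G u v).Walk (.inr 1) (.inr 1)} (hc : c.IsCycle) : c.length % 3 = 2 := by
  rcases eq_of_adj_inr_one (c.adj_snd hc.not_nil) with h0 | h2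
  · exact length_mod_three_of_snd_eq_inr_zero huv hG hc h0
  · have hpen : c.penultimate = .inr 0 := by
      rcases eq_of_adj_inr_one (c.adj_penultimate hc.not_nil).symm with h | h
      · exact h
      · exact absurd (h2.trans h.symm) hc.snd_ne_penultimate
    rw [← length_reverse]
    exact length_mod_three_of_snd_eq_inr_zero huv hG hc.reverse (by rw [snd_reverse, hpen])

end addFourPath

open SimpleGraph Walk addFourPath in
/-- Let `G` be a graph in which every cycle has length `≡ 2 (mod 3)`,
and let `G'` be obtained from `G` by adding a path with 4 edges joining the
endpoints of an edge `uv ∈ E(G)`, with new internal vertices.  Then every cycle of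
`G'` also has length `≡ 2 (mod 3)`. -/
theorem cycles_two_mod_three_extend {V : Type*} (G : SimpleGraph V)
    (u v : V) (huv : G.Adj u v)
    (hG : ∀ (x : V) (w : G.Walk x x), w.IsCycle → w.length % 3 = 2) :
    ∀ (x : V ⊕ Fin 3) (w : (addFourPath G u v).Walk x x),
      w.IsCycle → w.length % 3 = 2 := by
  intro x c hc
  by_cases hnew : ∃ j, .inr j ∈ c.support
  · classical
    obtain ⟨j, hj⟩ := hnew
    have h1 := inr_one_mem_support hc hj
    rw [← length_rotate c _ h1]
    exact length_mod_three_of_isCycle_inr_one huv hG (hc.rotate h1)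
  · simp only [not_exists] at hnew
    obtain ⟨a, rfl⟩ : ∃ a, x = .inl a := by
      rcases x with a | j
      · exact ⟨a, rfl⟩
      · exact absurd c.start_mem_support (hnew j)
    obtain ⟨p, hpc⟩ := exists_map_inlEmbedding_eq c hnew
    have hp : p.IsCycle := (isCycle_map_iff_of_injective Sum.inl_injective).mp (hpc ▸ hc)
    have hlen : c.length = p.length := hpc ▸ length_map _ _
    exact hlen ▸ hG a p hp
end

section
/- Let G be obtained from a 5-cycle by repeatedly attaching an internally-disjoint path of length at least 3 whose two endpoints already lie in the current graph and are joined by a path of length at most 2 in the current graph (operations of type A₂ and A₃). Then G contains no 3-cycle and no 4-cycle. -/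
/-- The graph (on vertex set `ℕ`) consisting of the path `q 0 - q 1 - ⋯ - q n`. -/
def pathOn {n : ℕ} (q : Fin (n + 1) → ℕ) : SimpleGraph ℕ :=
  SimpleGraph.fromRel (fun a b => ∃ i : Fin n, a = q i.castSucc ∧ b = q i.succ)

/-- The graph (on vertex set `ℕ`) consisting of the 5-cycle `c 0 - c 1 - ⋯ - c 4 - c 0`. -/
def cycle5On (c : Fin 5 → ℕ) : SimpleGraph ℕ :=
  SimpleGraph.fromRel (fun a b => ∃ i : Fin 5, a = c i ∧ b = c (i + 1))

/-- Graphs obtainable from a 5-cycle by repeatedly applying steps of type `A₂`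
(attach a path with 4 edges between the endpoints of an existing edge, new internal
vertices) and `A₃` (attach a path with 3 edges between the endpoints of an existing
path with 2 edges, new internal vertices). -/
inductive A23Constructible : SimpleGraph ℕ → Prop
  | base (c : Fin 5 → ℕ) (hc : Function.Injective c) :
      A23Constructible (cycle5On c)
  | stepA2 (G : SimpleGraph ℕ) (hG : A23Constructible G) (q : Fin 5 → ℕ)
      (hq : Function.Injective q) (hend : G.Adj (q 0) (q 4))
      (hnew : ∀ i : Fin 5, i ≠ 0 → i ≠ 4 → ∀ x, ¬ G.Adj (q i) x) :
      A23Constructible (G ⊔ pathOn (n := 4) q)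
  | stepA3 (G : SimpleGraph ℕ) (hG : A23Constructible G) (q : Fin 4 → ℕ)
      (hq : Function.Injective q) (w : ℕ) (h1 : G.Adj (q 0) w) (h2 : G.Adj w (q 3))
      (hnew : ∀ i : Fin 4, i ≠ 0 → i ≠ 3 → ∀ x, ¬ G.Adj (q i) x) :
      A23Constructible (G ⊔ pathOn (n := 3) q)

lemma pathOn_adj {n : ℕ} {q : Fin (n+1) → ℕ} {a b : ℕ} (h : (pathOn q).Adj a b) :
    ∃ i : Fin n, (a = q i.castSucc ∧ b = q i.succ) ∨ (b = q i.castSucc ∧ a = q i.succ) := by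
  rw [pathOn, SimpleGraph.fromRel_adj] at h
  rcases h.2 with ⟨i, h'⟩ | ⟨i, h'⟩
  exacts [⟨i, Or.inl h'⟩, ⟨i, Or.inr h'⟩]

lemma cycle5_adj {c : Fin 5 → ℕ} {a b : ℕ} (h : (cycle5On c).Adj a b) :
    ∃ i j : Fin 5, a = c i ∧ b = c j ∧ (j = i + 1 ∨ i = j + 1) := by
  rw [cycle5On, SimpleGraph.fromRel_adj] at h
  rcases h.2 with ⟨i, h1, h2⟩ | ⟨i, h1, h2⟩
  · exact ⟨i, i + 1, h1, h2, Or.inl rfl⟩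
  · exact ⟨i + 1, i, h2, h1, Or.inr rfl⟩

lemma a2_nbr (G : SimpleGraph ℕ) (q : Fin 5 → ℕ) (hq : Function.Injective q)
    (hnew : ∀ i : Fin 5, i ≠ 0 → i ≠ 4 → ∀ x, ¬ G.Adj (q i) x)
    (i : Fin 5) (h0 : i ≠ 0) (h4 : i ≠ 4) (x : ℕ)
    (h : (G ⊔ pathOn (n := 4) q).Adj (q i) x) : x = q (i - 1) ∨ x = q (i + 1) := by
  rcases h with h | h
  · exact absurd h (hnew i h0 h4 x)
  · obtain ⟨j, ⟨e1, e2⟩ | ⟨e1, e2⟩⟩ := pathOn_adj h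
    · right
      rw [e2, (by decide : ∀ (i : Fin 5) (j : Fin 4), i = j.castSucc → j.succ = i + 1) i j (hq e1)]
    · left
      rw [e1, (by decide : ∀ (i : Fin 5) (j : Fin 4), i = j.succ → j.castSucc = i - 1) i j (hq e2)]

lemma a3_nbr (G : SimpleGraph ℕ) (q : Fin 4 → ℕ) (hq : Function.Injective q)
    (hnew : ∀ i : Fin 4, i ≠ 0 → i ≠ 3 → ∀ x, ¬ G.Adj (q i) x)
    (i : Fin 4) (h0 : i ≠ 0) (h3 : i ≠ 3) (x : ℕ)
    (h : (G ⊔ pathOn (n := 3) q).Adj (q i) x) : x = q (i - 1) ∨ x = q (i + 1) := by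
  rcases h with h | h
  · exact absurd h (hnew i h0 h3 x)
  · obtain ⟨j, ⟨e1, e2⟩ | ⟨e1, e2⟩⟩ := pathOn_adj h
    · right
      rw [e2, (by decide : ∀ (i : Fin 4) (j : Fin 3), i = j.castSucc → j.succ = i + 1) i j (hq e1)]
    · left
      rw [e1, (by decide : ∀ (i : Fin 4) (j : Fin 3), i = j.succ → j.castSucc = i - 1) i j (hq e2)]

lemma a23_key (G : SimpleGraph ℕ) (hG : A23Constructible G) :
    (∀ a b c : ℕ, G.Adj a b → G.Adj b c → G.Adj c a → False) ∧
    (∀ a b c d : ℕ, G.Adj a b → G.Adj b c → G.Adj c d → G.Adj d a → a ≠ c → b ≠ d → False) := by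
  induction hG with
  | base c hc =>
    constructor
    · intro a b v hab hbv hva
      obtain ⟨i1, j1, ha1, hb1, r1⟩ := cycle5_adj hab
      obtain ⟨i2, j2, hb2, hv2, r2⟩ := cycle5_adj hbv
      obtain ⟨i3, j3, hv3, ha3, r3⟩ := cycle5_adj hva
      have e1 : j1 = i2 := hc (hb1.symm.trans hb2)
      have e2 : j2 = i3 := hc (hv2.symm.trans hv3)
      have e3 : j3 = i1 := hc (ha3.symm.trans ha1)
      rw [e1] at r1; rw [e2] at r2; rw [e3] at r3
      exact (by decide : ∀ i j k : Fin 5, (j = i+1 ∨ i = j+1) → (k = j+1 ∨ j = k+1) →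
        (i = k+1 ∨ k = i+1) → False) i1 i2 i3 r1 r2 r3
    · intro a b v d hab hbv hvd hda hac hbd
      obtain ⟨i1, j1, ha1, hb1, r1⟩ := cycle5_adj hab
      obtain ⟨i2, j2, hb2, hv2, r2⟩ := cycle5_adj hbv
      obtain ⟨i3, j3, hv3, hd3, r3⟩ := cycle5_adj hvd
      obtain ⟨i4, j4, hd4, ha4, r4⟩ := cycle5_adj hda
      have e1 : j1 = i2 := hc (hb1.symm.trans hb2)
      have e2 : j2 = i3 := hc (hv2.symm.trans hv3)
      have e3 : j3 = i4 := hc (hd3.symm.trans hd4)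
      have e4 : j4 = i1 := hc (ha4.symm.trans ha1)
      rw [e1] at r1; rw [e2] at r2; rw [e3] at r3; rw [e4] at r4
      have n13 : i1 ≠ i3 := fun h => hac (by rw [ha1, hv3, h])
      have n24 : i2 ≠ i4 := fun h => hbd (by rw [hb2, hd4, h])
      exact (by decide : ∀ i j k l : Fin 5, (j = i+1 ∨ i = j+1) → (k = j+1 ∨ j = k+1) →
        (l = k+1 ∨ k = l+1) → (i = l+1 ∨ l = i+1) → i ≠ k → j ≠ l → False)
        i1 i2 i3 i4 r1 r2 r3 r4 n13 n24
  | stepA2 G hG q hq hend hnew ih =>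
  set G' := G ⊔ pathOn (n := 4) q with hG'
  have n1 : ∀ x, G'.Adj (q 1) x → x = q 0 ∨ x = q 2 := by
    intro x h
    have := a2_nbr G q hq hnew 1 (by decide) (by decide) x h
    rwa [show (1:Fin 5) - 1 = 0 by decide, show (1:Fin 5) + 1 = 2 by decide] at this
  have n2 : ∀ x, G'.Adj (q 2) x → x = q 1 ∨ x = q 3 := by
    intro x h
    have := a2_nbr G q hq hnew 2 (by decide) (by decide) x h
    rwa [show (2:Fin 5) - 1 = 1 by decide, show (2:Fin 5) + 1 = 3 by decide] at this
  have n3 : ∀ x, G'.Adj (q 3) x → x = q 2 ∨ x = q 4 := by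
    intro x h
    have := a2_nbr G q hq hnew 3 (by decide) (by decide) x h
    rwa [show (3:Fin 5) - 1 = 2 by decide, show (3:Fin 5) + 1 = 4 by decide] at this
  have ne : ∀ i j : Fin 5, i ≠ j → q i ≠ q j := fun i j h => hq.ne h
  -- every G'-edge is a G-edge or touches an internal vertex
  have hI : ∀ x y, G'.Adj x y → G.Adj x y ∨
      ((x = q 1 ∨ x = q 2 ∨ x = q 3) ∨ (y = q 1 ∨ y = q 2 ∨ y = q 3)) := by
    intro x y h
    rcases h with h | h
    · exact Or.inl h
    · right
      obtain ⟨j, ⟨e1, e2⟩ | ⟨e1, e2⟩⟩ := pathOn_adj h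
      · rcases (by decide : ∀ j : Fin 4, (j.castSucc = (1:Fin 5) ∨ j.castSucc = 2 ∨ j.castSucc = 3)
            ∨ (j.succ = (1:Fin 5) ∨ j.succ = 2 ∨ j.succ = 3)) j with hj | hj
        · exact Or.inl (by rw [e1]; rcases hj with h|h|h <;> rw [h] <;> simp)
        · exact Or.inr (by rw [e2]; rcases hj with h|h|h <;> rw [h] <;> simp)
      · rcases (by decide : ∀ j : Fin 4, (j.castSucc = (1:Fin 5) ∨ j.castSucc = 2 ∨ j.castSucc = 3)
            ∨ (j.succ = (1:Fin 5) ∨ j.succ = 2 ∨ j.succ = 3)) j with hj | hj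
        · exact Or.inr (by rw [e1]; rcases hj with h|h|h <;> rw [h] <;> simp)
        · exact Or.inl (by rw [e2]; rcases hj with h|h|h <;> rw [h] <;> simp)
  have tri : ∀ u x y, G'.Adj u x → G'.Adj x y → G'.Adj y u →
      (x = q 1 ∨ x = q 2 ∨ x = q 3) → False := by
    intro u x y hux hxy hyu hint
    rcases hint with h | h | h <;> subst h
    · rcases n1 u hux.symm with h | h <;> rcases n1 y hxy with h' | h' <;> subst h <;> subst h'
      · exact hyu.ne rfl
      · rcases n2 (q 0) hyu with h | h
        exacts [ne 0 1 (by decide) h, ne 0 3 (by decide) h]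
      · rcases n2 (q 0) hyu.symm with h | h
        exacts [ne 0 1 (by decide) h, ne 0 3 (by decide) h]
      · exact hyu.ne rfl
    · rcases n2 u hux.symm with h | h <;> rcases n2 y hxy with h' | h' <;> subst h <;> subst h'
      · exact hyu.ne rfl
      · rcases n1 (q 3) hyu.symm with h | h
        exacts [ne 3 0 (by decide) h, ne 3 2 (by decide) h]
      · rcases n1 (q 3) hyu with h | h
        exacts [ne 3 0 (by decide) h, ne 3 2 (by decide) h]
      · exact hyu.ne rfl
    · rcases n3 u hux.symm with h | h <;> rcases n3 y hxy with h' | h' <;> subst h <;> subst h'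
      · exact hyu.ne rfl
      · rcases n2 (q 4) hyu.symm with h | h
        exacts [ne 4 1 (by decide) h, ne 4 3 (by decide) h]
      · rcases n2 (q 4) hyu with h | h
        exacts [ne 4 1 (by decide) h, ne 4 3 (by decide) h]
      · exact hyu.ne rfl
  have quad : ∀ u x y z, G'.Adj u x → G'.Adj x y → G'.Adj y z → G'.Adj z u →
      u ≠ y → x ≠ z → (x = q 1 ∨ x = q 2 ∨ x = q 3) → False := by
    intro u x y z hux hxy hyz hzu huy hxz hint
    rcases hint with h | h | h <;> subst h
    · rcases n1 u hux.symm with h | h <;> rcases n1 y hxy with h' | h' <;> subst h <;> subst h'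
      · exact huy rfl
      · -- u = q0, y = q2
        rcases n2 z hyz with h | h <;> subst h
        · exact hxz rfl
        · rcases n3 (q 0) hzu with h | h
          exacts [ne 0 2 (by decide) h, ne 0 4 (by decide) h]
      · -- u = q2, y = q0
        rcases n2 z hzu.symm with h | h <;> subst h
        · exact hxz rfl
        · rcases n3 (q 0) hyz.symm with h | h
          exacts [ne 0 2 (by decide) h, ne 0 4 (by decide) h]
      · exact huy rfl
    · rcases n2 u hux.symm with h | h <;> rcases n2 y hxy with h' | h' <;> subst h <;> subst h'
      · exact huy rfl
      · -- u = q1, y = q3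
        rcases n3 z hyz with h | h <;> subst h
        · exact hxz rfl
        · rcases n1 (q 4) hzu.symm with h | h
          exacts [ne 4 0 (by decide) h, ne 4 2 (by decide) h]
      · -- u = q3, y = q1
        rcases n3 z hzu.symm with h | h <;> subst h
        · exact hxz rfl
        · rcases n1 (q 4) hyz with h | h
          exacts [ne 4 0 (by decide) h, ne 4 2 (by decide) h]
      · exact huy rfl
    · rcases n3 u hux.symm with h | h <;> rcases n3 y hxy with h' | h' <;> subst h <;> subst h'
      · exact huy rfl
      · -- u = q2, y = q4
        rcases n2 z hzu.symm with h | h <;> subst h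
        · rcases n1 (q 4) hyz.symm with h | h
          exacts [ne 4 0 (by decide) h, ne 4 2 (by decide) h]
        · exact hxz rfl
      · -- u = q4, y = q2
        rcases n2 z hyz with h | h <;> subst h
        · rcases n1 (q 4) hzu with h | h
          exacts [ne 4 0 (by decide) h, ne 4 2 (by decide) h]
        · exact hxz rfl
      · exact huy rfl
  constructor
  · intro a b c hab hbc hca
    rcases hI a b hab with h1 | h | h
    · rcases hI b c hbc with h2 | h | h
      · rcases hI c a hca with h3 | h | h
        · exact ih.1 a b c h1 h2 h3
        · exact tri b c a hbc hca hab h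
        · exact tri c a b hca hab hbc h
      · exact tri a b c hab hbc hca h
      · exact tri b c a hbc hca hab h
    · exact tri c a b hca hab hbc h
    · exact tri a b c hab hbc hca h
  · intro a b c d hab hbc hcd hda hac hbd
    rcases hI a b hab with h1 | h | h
    · rcases hI b c hbc with h2 | h | h
      · rcases hI c d hcd with h3 | h | h
        · rcases hI d a hda with h4 | h | h
          · exact ih.2 a b c d h1 h2 h3 h4 hac hbd
          · exact quad c d a b hcd hda hab hbc hac.symm hbd.symm h
          · exact quad d a b c hda hab hbc hcd hbd.symm hac h
        · exact quad b c d a hbc hcd hda hab hbd hac.symm h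
        · exact quad c d a b hcd hda hab hbc hac.symm hbd.symm h
      · exact quad a b c d hab hbc hcd hda hac hbd h
      · exact quad b c d a hbc hcd hda hab hbd hac.symm h
    · exact quad d a b c hda hab hbc hcd hbd.symm hac h
    · exact quad a b c d hab hbc hcd hda hac hbd h
  | stepA3 G hG q hq w h1 h2 hnew ih =>
  set G' := G ⊔ pathOn (n := 3) q with hG'
  have n1 : ∀ x, G'.Adj (q 1) x → x = q 0 ∨ x = q 2 := by
    intro x h
    have := a3_nbr G q hq hnew 1 (by decide) (by decide) x h
    rwa [show (1:Fin 4) - 1 = 0 by decide, show (1:Fin 4) + 1 = 2 by decide] at this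
  have n2 : ∀ x, G'.Adj (q 2) x → x = q 1 ∨ x = q 3 := by
    intro x h
    have := a3_nbr G q hq hnew 2 (by decide) (by decide) x h
    rwa [show (2:Fin 4) - 1 = 1 by decide, show (2:Fin 4) + 1 = 3 by decide] at this
  have ne : ∀ i j : Fin 4, i ≠ j → q i ≠ q j := fun i j h => hq.ne h
  have h30 : ¬ G'.Adj (q 3) (q 0) := by
    intro h
    rcases h with h | h
    · exact ih.1 (q 0) w (q 3) h1 h2 h
    · obtain ⟨j, ⟨e1, e2⟩ | ⟨e1, e2⟩⟩ := pathOn_adj h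
      · exact (by decide : ∀ j : Fin 3, ¬((3:Fin 4) = j.castSucc ∧ (0:Fin 4) = j.succ)) j
          ⟨hq e1, hq e2⟩
      · exact (by decide : ∀ j : Fin 3, ¬((0:Fin 4) = j.castSucc ∧ (3:Fin 4) = j.succ)) j
          ⟨hq e1, hq e2⟩
  have hI : ∀ x y, G'.Adj x y → G.Adj x y ∨
      ((x = q 1 ∨ x = q 2) ∨ (y = q 1 ∨ y = q 2)) := by
    intro x y h
    rcases h with h | h
    · exact Or.inl h
    · right
      obtain ⟨j, ⟨e1, e2⟩ | ⟨e1, e2⟩⟩ := pathOn_adj h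
      · rcases (by decide : ∀ j : Fin 3, (j.castSucc = (1:Fin 4) ∨ j.castSucc = 2)
            ∨ (j.succ = (1:Fin 4) ∨ j.succ = 2)) j with hj | hj
        · exact Or.inl (by rw [e1]; rcases hj with h | h <;> rw [h] <;> simp)
        · exact Or.inr (by rw [e2]; rcases hj with h | h <;> rw [h] <;> simp)
      · rcases (by decide : ∀ j : Fin 3, (j.castSucc = (1:Fin 4) ∨ j.castSucc = 2)
            ∨ (j.succ = (1:Fin 4) ∨ j.succ = 2)) j with hj | hj
        · exact Or.inr (by rw [e1]; rcases hj with h | h <;> rw [h] <;> simp)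
        · exact Or.inl (by rw [e2]; rcases hj with h | h <;> rw [h] <;> simp)
  have tri : ∀ u x y, G'.Adj u x → G'.Adj x y → G'.Adj y u →
      (x = q 1 ∨ x = q 2) → False := by
    intro u x y hux hxy hyu hint
    rcases hint with h | h <;> subst h
    · rcases n1 u hux.symm with h | h <;> rcases n1 y hxy with h' | h' <;> subst h <;> subst h'
      · exact hyu.ne rfl
      · rcases n2 (q 0) hyu with h | h
        exacts [ne 0 1 (by decide) h, ne 0 3 (by decide) h]
      · rcases n2 (q 0) hyu.symm with h | h
        exacts [ne 0 1 (by decide) h, ne 0 3 (by decide) h]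
      · exact hyu.ne rfl
    · rcases n2 u hux.symm with h | h <;> rcases n2 y hxy with h' | h' <;> subst h <;> subst h'
      · exact hyu.ne rfl
      · rcases n1 (q 3) hyu.symm with h | h
        exacts [ne 3 0 (by decide) h, ne 3 2 (by decide) h]
      · rcases n1 (q 3) hyu with h | h
        exacts [ne 3 0 (by decide) h, ne 3 2 (by decide) h]
      · exact hyu.ne rfl
  have quad : ∀ u x y z, G'.Adj u x → G'.Adj x y → G'.Adj y z → G'.Adj z u →
      u ≠ y → x ≠ z → (x = q 1 ∨ x = q 2) → False := by
    intro u x y z hux hxy hyz hzu huy hxz hint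
    rcases hint with h | h <;> subst h
    · rcases n1 u hux.symm with h | h <;> rcases n1 y hxy with h' | h' <;> subst h <;> subst h'
      · exact huy rfl
      · -- u = q0, y = q2
        rcases n2 z hyz with h | h <;> subst h
        · exact hxz rfl
        · exact h30 hzu
      · -- u = q2, y = q0
        rcases n2 z hzu.symm with h | h <;> subst h
        · exact hxz rfl
        · exact h30 hyz.symm
      · exact huy rfl
    · rcases n2 u hux.symm with h | h <;> rcases n2 y hxy with h' | h' <;> subst h <;> subst h'
      · exact huy rfl
      · -- u = q1, y = q3
        rcases n1 z hzu.symm with h | h <;> subst h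
        · exact h30 hyz
        · exact hxz rfl
      · -- u = q3, y = q1
        rcases n1 z hyz with h | h <;> subst h
        · exact h30 hzu.symm
        · exact hxz rfl
      · exact huy rfl
  constructor
  · intro a b c hab hbc hca
    rcases hI a b hab with hg1 | h | h
    · rcases hI b c hbc with hg2 | h | h
      · rcases hI c a hca with hg3 | h | h
        · exact ih.1 a b c hg1 hg2 hg3
        · exact tri b c a hbc hca hab h
        · exact tri c a b hca hab hbc h
      · exact tri a b c hab hbc hca h
      · exact tri b c a hbc hca hab h
    · exact tri c a b hca hab hbc h
    · exact tri a b c hab hbc hca h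
  · intro a b c d hab hbc hcd hda hac hbd
    rcases hI a b hab with hg1 | h | h
    · rcases hI b c hbc with hg2 | h | h
      · rcases hI c d hcd with hg3 | h | h
        · rcases hI d a hda with hg4 | h | h
          · exact ih.2 a b c d hg1 hg2 hg3 hg4 hac hbd
          · exact quad c d a b hcd hda hab hbc hac.symm hbd.symm h
          · exact quad d a b c hda hab hbc hcd hbd.symm hac h
        · exact quad b c d a hbc hcd hda hab hbd hac.symm h
        · exact quad c d a b hcd hda hab hbc hac.symm hbd.symm h
      · exact quad a b c d hab hbc hcd hda hac hbd h
      · exact quad b c d a hbc hcd hda hab hbd hac.symm h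
    · exact quad d a b c hda hab hbc hcd hbd.symm hac h
    · exact quad a b c d hab hbc hcd hda hac hbd h

lemma walk3 {G : SimpleGraph ℕ} {x : ℕ} (w : G.Walk x x) (h : w.length = 3) :
    ∃ b c, G.Adj x b ∧ G.Adj b c ∧ G.Adj c x := by
  match w with
  | .nil => simp at h
  | .cons h1 .nil => simp at h
  | .cons h1 (.cons h2 .nil) => simp at h
  | .cons h1 (.cons h2 (.cons h3 .nil)) => exact ⟨_, _, h1, h2, h3⟩
  | .cons h1 (.cons h2 (.cons h3 (.cons h4 p))) => simp [SimpleGraph.Walk.length_cons] at h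

lemma walk4 {G : SimpleGraph ℕ} {x : ℕ} (w : G.Walk x x) (h : w.length = 4)
    (hn : w.support.tail.Nodup) :
    ∃ b c d, G.Adj x b ∧ G.Adj b c ∧ G.Adj c d ∧ G.Adj d x ∧ x ≠ c ∧ b ≠ d := by
  match w with
  | .nil => simp at h
  | .cons h1 .nil => simp at h
  | .cons h1 (.cons h2 .nil) => simp at h
  | .cons h1 (.cons h2 (.cons h3 .nil)) => simp at h
  | .cons h1 (.cons h2 (.cons h3 (.cons h4 .nil))) =>
    simp [SimpleGraph.Walk.support_cons] at hn
    exact ⟨_, _, _, h1, h2, h3, h4, fun e => hn.2.1.2 e.symm, hn.1.2.1⟩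
  | .cons h1 (.cons h2 (.cons h3 (.cons h4 (.cons h5 p)))) => simp [SimpleGraph.Walk.length_cons] at h

/-- Any graph obtained from a 5-cycle by steps of types `A₂` and `A₃`
contains no 3-cycle and no 4-cycle. -/
theorem a23_constructible_no_C3_no_C4 (G : SimpleGraph ℕ)
    (hG : A23Constructible G) :
    ∀ (x : ℕ) (w : G.Walk x x), w.IsCycle → w.length ≠ 3 ∧ w.length ≠ 4 := by
  intro x w hcyc
  obtain ⟨k3, k4⟩ := a23_key G hG
  refine ⟨fun hlen => ?_, fun hlen => ?_⟩
  · obtain ⟨b, c, e1, e2, e3⟩ := walk3 w hlen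
    exact k3 x b c e1 e2 e3
  · obtain ⟨b, c, d, e1, e2, e3, e4, hxc, hbd⟩ := walk4 w hlen hcyc.support_nodup
    exact k4 x b c d e1 e2 e3 e4 hxc hbd
end
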